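/- arXiv:math/0309159 — 7 statements merged into one kernel-verified Lean document; each statement's English description precedes it below -/
import Mathlib

section
/- With the period Ω_c defined below, and assuming additionally that f is twice continuously differentiable in a neighbourhood of r* with f″(r*) < 0, the limit of Ω_c as c → f(r*)⁻ equals 2π/√(−f″(r*)·f(r*)). -/
/-!
Write `M = f r*` and `a = -f''(r*)`, and split the period integral at `r*`. On the decreasing
half `[r*, r₂(c)]` the integrand factors as `φ_c · w_c` with
`w_c = -f' / (2 √(M - f) √(f - c))` and `φ_c = 2 c √(M - f) / (f √(f + c) (-f'))`.
The weight `w_c` is the derivative of `arcsin (√(M - f) / √(M - c))`, so its integral is exactly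
`π / 2` for every `c`. Since `f'² / (M - f) → 2a` at `r*` (L'Hôpital), `φ_c → 1 / √(a M)`
uniformly on the shrinking interval `[r*, r₂(c)]` as `c → M⁻`, so each half of the integral tends
to `π / (2 √(a M))`. The increasing half is the decreasing half of `x ↦ f (-x)`.
-/

open Set Filter Topology MeasureTheory Real

theorem hasDerivAt_arcsin_sqrt_sub_div {f : ℝ → ℝ} {f' x M c : ℝ} (hf : HasDerivAt f f' x)
    (hc : c < f x) (hM : f x < M) :
    HasDerivAt (fun y => arcsin (√(M - f y) / √(M - c)))
      (-f' / (2 * √(M - f x) * √(f x - c))) x := by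
  have hMc : 0 < M - c := by linarith
  have hu : HasDerivAt (fun y => √(M - f y) / √(M - c))
      (-f' / (2 * √(M - f x)) / √(M - c)) x :=
    ((hf.const_sub M).sqrt (by linarith)).div_const _
  have hu_lt : √(M - f x) / √(M - c) < 1 := by
    rw [div_lt_one (sqrt_pos.2 hMc)]
    exact sqrt_lt_sqrt (by linarith) (by linarith)
  have hu_nonneg : 0 ≤ √(M - f x) / √(M - c) := by positivity
  have hsqrt : √(1 - (√(M - f x) / √(M - c)) ^ 2) = √(f x - c) / √(M - c) := by
    rw [div_pow, sq_sqrt (by linarith), sq_sqrt hMc.le, ← sqrt_div' _ hMc.le]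
    congr 1
    field_simp
    ring
  refine ((hasDerivAt_arcsin (by linarith) hu_lt.ne).comp x hu).congr_deriv ?_
  rw [hsqrt]
  have : 0 < √(f x - c) := sqrt_pos.2 (by linarith)
  have : 0 < √(M - c) := sqrt_pos.2 hMc
  field_simp

theorem HasDerivAt.eventually_pos_nhdsLT_and_neg_nhdsGT {g : ℝ → ℝ} {g' x₀ : ℝ}
    (h : HasDerivAt g g' x₀) (hg : g x₀ = 0) (hg' : g' < 0) :
    (∀ᶠ x in 𝓝[<] x₀, 0 < g x) ∧ ∀ᶠ x in 𝓝[>] x₀, g x < 0 := by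
  rw [hasDerivAt_iff_tendsto_slope_left_right] at h
  have hslope : ∀ x ≠ x₀, g x = slope g x₀ x * (x - x₀) := fun x hx => by
    rw [slope_def_field, hg, sub_zero, div_mul_cancel₀ _ (sub_ne_zero.2 hx)]
  constructor
  · filter_upwards [h.1.eventually_lt_const hg', self_mem_nhdsWithin] with x hs hx
    rw [hslope x (ne_of_lt hx)]
    exact mul_pos_of_neg_of_neg hs (sub_neg.2 hx)
  · filter_upwards [h.2.eventually_lt_const hg', self_mem_nhdsWithin] with x hs hx
    rw [hslope x (ne_of_gt hx)]
    exact mul_neg_of_neg_of_pos hs (sub_pos.2 hx)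

theorem tendsto_sq_deriv_div_sub_nhdsNE {f f' f'' : ℝ → ℝ} {x₀ : ℝ}
    (hf : ∀ᶠ x in 𝓝 x₀, HasDerivAt f (f' x) x ∧ HasDerivAt f' (f'' x) x)
    (hf'₀ : f' x₀ = 0) (hf'' : ContinuousAt f'' x₀) (hne : f'' x₀ ≠ 0) :
    Tendsto (fun x => f' x ^ 2 / (f x₀ - f x)) (𝓝[≠] x₀) (𝓝 (2 * -f'' x₀)) := by
  have hf_punct : ∀ᶠ x in 𝓝[≠] x₀, HasDerivAt f (f' x) x ∧ HasDerivAt f' (f'' x) x :=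
    nhdsWithin_le_nhds hf
  have hf'ne : ∀ᶠ x in 𝓝[≠] x₀, f' x ≠ 0 := hf.self_of_nhds.2.eventually_ne (c := 0) hne
  refine HasDerivAt.lhopital_zero_nhdsNE (f' := fun x => 2 * f' x * f'' x)
    (g' := fun x => -f' x) (hf_punct.mono fun x hx => ?_) (hf_punct.mono fun x hx => hx.1.const_sub _)
    (hf'ne.mono fun x hx => neg_ne_zero.2 hx) ?_ ?_ ?_
  · exact (hx.2.pow 2).congr_deriv (by ring)
  · have := hf.self_of_nhds.2.continuousAt.tendsto.pow 2
    rw [hf'₀, zero_pow two_ne_zero] at this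
    exact this.mono_left nhdsWithin_le_nhds
  · have := (tendsto_const_nhds (x := f x₀)).sub hf.self_of_nhds.1.continuousAt.tendsto
    rw [sub_self] at this
    exact this.mono_left nhdsWithin_le_nhds
  · refine ((hf''.tendsto.neg.const_mul 2).mono_left nhdsWithin_le_nhds).congr' ?_
    filter_upwards [hf'ne] with x hx
    field_simp

theorem ContDiffOn.eventually_hasDerivAt_deriv_deriv {f : ℝ → ℝ} {s : Set ℝ} {x₀ : ℝ}
    (hf : ContDiffOn ℝ 2 f s) (hs : IsOpen s) (hx₀ : x₀ ∈ s) :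
    (∀ᶠ x in 𝓝 x₀, HasDerivAt f (deriv f x) x ∧ HasDerivAt (deriv f) (deriv (deriv f) x) x) ∧
      ContinuousAt (deriv (deriv f)) x₀ := by
  have hf' : ContDiffOn ℝ 1 (deriv f) s := hf.deriv_of_isOpen hs (by norm_num)
  refine ⟨(hs.eventually_mem hx₀).mono fun x hx => ⟨?_, ?_⟩,
    (hf'.continuousOn_deriv_of_isOpen hs le_rfl).continuousAt (hs.mem_nhds hx₀)⟩
  · exact ((hf.differentiableOn (by norm_num)).differentiableAt (hs.mem_nhds hx)).hasDerivAt
  · exact ((hf'.differentiableOn (by norm_num)).differentiableAt (hs.mem_nhds hx)).hasDerivAt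

theorem Filter.Eventually.forall_Ioo_of_prod_nhdsGT {α : Type*} {l : Filter α} {ρ : α → ℝ}
    {x₀ : ℝ} {p : α → ℝ → Prop} (hp : ∀ᶠ q in l ×ˢ 𝓝[>] x₀, p q.1 q.2)
    (hρ : Tendsto ρ l (𝓝 x₀)) : ∀ᶠ c in l, ∀ x ∈ Ioo x₀ (ρ c), p c x := by
  obtain ⟨pa, hpa, pb, hpb, h⟩ := eventually_prod_iff.1 hp
  obtain ⟨u, hu, hsub⟩ := mem_nhdsGT_iff_exists_Ioo_subset.1 hpb
  filter_upwards [hpa, hρ.eventually (gt_mem_nhds hu)] with c hc hρc x hx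
  exact h hc (hsub ⟨hx.1, hx.2.trans hρc⟩)

theorem tendsto_intervalIntegral_of_abs_sub_mul_le {α : Type*} {l : Filter α} {a b : α → ℝ}
    {F w : α → ℝ → ℝ} {K I : ℝ} (hab : ∀ᶠ c in l, a c ≤ b c)
    (hF : ∀ᶠ c in l, IntervalIntegrable (F c) volume (a c) (b c))
    (hw : ∀ᶠ c in l, ∫ x in a c..b c, w c x = I) (hI : I ≠ 0)
    (hclose : ∀ ε > 0, ∀ᶠ c in l, ∀ x ∈ Ioo (a c) (b c), |F c x - K * w c x| ≤ ε * w c x) :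
    Tendsto (fun c => ∫ x in a c..b c, F c x) l (𝓝 (K * I)) := by
  rw [Metric.tendsto_nhds]
  intro ε hε
  have hε' : 0 < ε / (|I| + 1) := by positivity
  filter_upwards [hab, hF, hw, hclose _ hε'] with c hab hF hwI hclose
  have hwint := intervalIntegral.intervalIntegrable_of_integral_ne_zero (hwI ▸ hI)
  have hbound : ‖∫ x in a c..b c, (F c x - K * w c x)‖ ≤
      ∫ x in a c..b c, ε / (|I| + 1) * w c x :=
    intervalIntegral.norm_integral_le_of_norm_le hab
      (by filter_upwards [Measure.ae_ne volume (b c)] with x hx hxI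
          exact hclose x ⟨hxI.1, lt_of_le_of_ne hxI.2 hx⟩)
      (hwint.const_mul _)
  rw [intervalIntegral.integral_sub hF (hwint.const_mul K), intervalIntegral.integral_const_mul,
    intervalIntegral.integral_const_mul, hwI] at hbound
  calc dist (∫ x in a c..b c, F c x) (K * I) ≤ ε / (|I| + 1) * I := hbound
    _ ≤ ε / (|I| + 1) * |I| := by gcongr; exact le_abs_self I
    _ < ε := by
      rw [div_mul_eq_mul_div, div_lt_iff₀ (by positivity)]
      nlinarith [abs_nonneg I]

theorem tendsto_nhdsGT_of_strictAntiOn {f ρ : ℝ → ℝ} {x₀ b : ℝ} (hf : StrictAntiOn f (Icc x₀ b))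
    (hρ : ∀ᶠ c in 𝓝[<] f x₀, ρ c ∈ Ioo x₀ b ∧ f (ρ c) = c) :
    Tendsto ρ (𝓝[<] f x₀) (𝓝[>] x₀) := by
  refine tendsto_nhdsWithin_iff.2 ⟨tendsto_order.2 ⟨fun y hy => ?_, fun y hy => ?_⟩,
    hρ.mono fun c hc => hc.1.1⟩
  · filter_upwards [hρ] with c hc using hy.trans hc.1.1
  · by_cases hyb : b ≤ y
    · filter_upwards [hρ] with c hc using hc.1.2.trans_le hyb
    have hy' : y ∈ Icc x₀ b := ⟨hy.le, (not_le.1 hyb).le⟩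
    filter_upwards [hρ, Ioo_mem_nhdsLT (hf (left_mem_Icc.2 (hy'.1.trans hy'.2)) hy' hy)]
      with c hc hfc
    exact (hf.lt_iff_gt hy' (Ioo_subset_Icc_self hc.1)).1 (hc.2.symm ▸ hfc.1)

theorem integral_neg_deriv_div_sqrt_mul_sqrt {f f' : ℝ → ℝ} {x₀ b c : ℝ} (hxb : x₀ < b)
    (hcont : ContinuousOn f (Icc x₀ b)) (hfb : f b = c) (hc : c < f x₀)
    (hderiv : ∀ x ∈ Ioo x₀ b, HasDerivAt f (f' x) x ∧ f' x < 0) :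
    ∫ x in x₀..b, -f' x / (2 * √(f x₀ - f x) * √(f x - c)) = π / 2 := by
  have hanti : StrictAntiOn f (Icc x₀ b) :=
    strictAntiOn_of_deriv_neg (convex_Icc x₀ b) hcont fun x hx => by
      rw [interior_Icc] at hx
      exact (hderiv x hx).1.deriv ▸ (hderiv x hx).2
  have hF : ∀ x ∈ Ioo x₀ b, HasDerivAt (fun y => arcsin (√(f x₀ - f y) / √(f x₀ - c)))
      (-f' x / (2 * √(f x₀ - f x) * √(f x - c))) x := fun x hx =>
    hasDerivAt_arcsin_sqrt_sub_div (hderiv x hx).1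
      (hfb ▸ hanti (Ioo_subset_Icc_self hx) (right_mem_Icc.2 hxb.le) hx.2)
      (hanti (left_mem_Icc.2 hxb.le) (Ioo_subset_Icc_self hx) hx.1)
  have hFcont : ContinuousOn (fun y => arcsin (√(f x₀ - f y) / √(f x₀ - c))) (Icc x₀ b) :=
    continuous_arcsin.comp_continuousOn ((continuousOn_const.sub hcont).sqrt.div_const _)
  have hnonneg : ∀ x ∈ Ioo x₀ b, 0 ≤ -f' x / (2 * √(f x₀ - f x) * √(f x - c)) := fun x hx =>
    div_nonneg (neg_nonneg.2 (hderiv x hx).2.le) (by positivity)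
  rw [intervalIntegral.integral_eq_sub_of_hasDerivAt_of_le hxb.le hFcont hF
    ((intervalIntegrable_iff_integrableOn_Ioc_of_le hxb.le).2
      (intervalIntegral.integrableOn_deriv_of_nonneg hFcont hF hnonneg))]
  simp [hfb, div_self (sqrt_pos.2 (sub_pos.2 hc)).ne']

theorem abs_div_mul_sqrt_sq_sub_sq_sub_le {c y M d K ε : ℝ} (hc : 0 < c) (hcy : c < y)
    (hyM : y < M) (hd : d < 0) (hK : |c / (y * √(y + c)) * (2 * √(M - y) / -d) - K| ≤ ε) :
    |c / (y * √(y ^ 2 - c ^ 2)) - K * (-d / (2 * √(M - y) * √(y - c)))| ≤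
      ε * (-d / (2 * √(M - y) * √(y - c))) := by
  have : 0 < √(M - y) := sqrt_pos.2 (by linarith)
  have : 0 < √(y - c) := sqrt_pos.2 (by linarith)
  have : 0 < √(y + c) := sqrt_pos.2 (by linarith)
  have hw : 0 ≤ -d / (2 * √(M - y) * √(y - c)) := div_nonneg (neg_nonneg.2 hd.le) (by positivity)
  have hfactor : c / (y * √(y ^ 2 - c ^ 2)) =
      c / (y * √(y + c)) * (2 * √(M - y) / -d) * (-d / (2 * √(M - y) * √(y - c))) := by
    rw [show y ^ 2 - c ^ 2 = (y + c) * (y - c) by ring, sqrt_mul (by linarith)]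
    have : 0 < y := by linarith
    have : d ≠ 0 := hd.ne
    field_simp
  rw [hfactor, ← sub_mul, abs_mul, abs_of_nonneg hw]
  exact mul_le_mul_of_nonneg_right hK hw

theorem tendsto_clairaut_factor {f f' : ℝ → ℝ} {x₀ M a : ℝ} (ha : 0 < a) (hM : 0 < M)
    (hfM : Tendsto f (𝓝[>] x₀) (𝓝 M))
    (hlim : Tendsto (fun x => f' x ^ 2 / (M - f x)) (𝓝[>] x₀) (𝓝 (2 * a)))
    (hsign : ∀ᶠ x in 𝓝[>] x₀, f' x < 0 ∧ f x < M) :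
    Tendsto (fun q : ℝ × ℝ => q.1 / (f q.2 * √(f q.2 + q.1)) * (2 * √(M - f q.2) / -f' q.2))
      (𝓝 M ×ˢ 𝓝[>] x₀) (𝓝 (1 / √(a * M))) := by
  have hfst : Tendsto (fun q : ℝ × ℝ => q.1) (𝓝 M ×ˢ 𝓝[>] x₀) (𝓝 M) := tendsto_fst
  have hsnd : Tendsto (fun q : ℝ × ℝ => f q.2) (𝓝 M ×ˢ 𝓝[>] x₀) (𝓝 M) := hfM.comp tendsto_snd
  have hK : M / (M * √(M + M)) * (2 / √(2 * a)) = 1 / √(a * M) := by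
    rw [← two_mul, sqrt_mul zero_le_two, sqrt_mul zero_le_two, sqrt_mul ha.le]
    have : 0 < √a := sqrt_pos.2 ha
    have : 0 < √M := sqrt_pos.2 hM
    field_simp
    norm_num
  rw [← hK]
  refine (hfst.div (hsnd.mul (hsnd.add hfst).sqrt) (by positivity)).mul
    ((tendsto_const_nhds.div (hlim.comp tendsto_snd).sqrt (by positivity)).congr' ?_)
  filter_upwards [tendsto_snd.eventually hsign] with q hq
  simp only [Pi.div_apply, Function.comp_apply]
  rw [sqrt_div' _ (sub_nonneg.2 hq.2.le), sqrt_sq_eq_abs, abs_of_neg hq.1,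
    div_div_eq_mul_div]

theorem tendsto_integral_clairaut_of_strictAntiOn {f f' ρ : ℝ → ℝ} {x₀ b M a : ℝ} (ha : 0 < a)
    (hM : 0 < M) (hx₀ : f x₀ = M) (hcont : ContinuousOn f (Icc x₀ b))
    (hanti : StrictAntiOn f (Icc x₀ b))
    (hderiv : ∀ᶠ x in 𝓝[>] x₀, HasDerivAt f (f' x) x ∧ f' x < 0)
    (hlim : Tendsto (fun x => f' x ^ 2 / (M - f x)) (𝓝[>] x₀) (𝓝 (2 * a)))
    (hρ : ∀ᶠ c in 𝓝[<] M, ρ c ∈ Ioo x₀ b ∧ f (ρ c) = c)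
    (hint : ∀ᶠ c in 𝓝[<] M,
      IntervalIntegrable (fun x => c / (f x * √(f x ^ 2 - c ^ 2))) volume x₀ (ρ c)) :
    Tendsto (fun c => ∫ x in x₀..ρ c, c / (f x * √(f x ^ 2 - c ^ 2))) (𝓝[<] M)
      (𝓝 (π / (2 * √(a * M)))) := by
  subst hx₀
  obtain ⟨c₀, hc₀⟩ := hρ.exists
  have hxb : x₀ < b := hc₀.1.1.trans hc₀.1.2
  obtain ⟨u, hu, hsub⟩ := mem_nhdsGT_iff_exists_Ioo_subset.1 (hderiv.and (Ioo_mem_nhdsGT hxb))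
  have hfM : ∀ x ∈ Ioo x₀ b, f x < f x₀ := fun x hx =>
    hanti (left_mem_Icc.2 hxb.le) (Ioo_subset_Icc_self hx) hx.1
  have hρlim := (tendsto_nhdsGT_of_strictAntiOn hanti hρ).mono_right nhdsWithin_le_nhds
  have hρu : ∀ᶠ c in 𝓝[<] f x₀, ρ c < u := hρlim.eventually (gt_mem_nhds hu)
  have hcM : ∀ᶠ c in 𝓝[<] f x₀, c ∈ Ioo 0 (f x₀) := Ioo_mem_nhdsLT hM
  have hfactor := (tendsto_clairaut_factor ha hM
    ((hcont x₀ (left_mem_Icc.2 hxb.le)).mono_of_mem_nhdsWithin (Icc_mem_nhdsGT hxb)) hlim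
    (by filter_upwards [hderiv, Ioo_mem_nhdsGT hxb] with x hx hxb using ⟨hx.2, hfM x hxb⟩))
  have hweight : ∀ᶠ c in 𝓝[<] f x₀,
      ∫ x in x₀..ρ c, -f' x / (2 * √(f x₀ - f x) * √(f x - c)) = π / 2 := by
    filter_upwards [hρ, hρu, hcM] with c hρc hρcu hc
    exact integral_neg_deriv_div_sqrt_mul_sqrt hρc.1.1
      (hcont.mono (Icc_subset_Icc_right hρc.1.2.le)) hρc.2 hc.2
      fun x hx => (hsub ⟨hx.1, hx.2.trans hρcu⟩).1
  have hclose : ∀ ε > 0, ∀ᶠ c in 𝓝[<] f x₀, ∀ x ∈ Ioo x₀ (ρ c),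
      |c / (f x * √(f x ^ 2 - c ^ 2)) - 1 / √(a * f x₀) *
        (-f' x / (2 * √(f x₀ - f x) * √(f x - c)))| ≤
      ε * (-f' x / (2 * √(f x₀ - f x) * √(f x - c))) := fun ε hε => by
    filter_upwards [((hfactor.mono_left (prod_mono nhdsWithin_le_nhds le_rfl)).eventually
      (Metric.closedBall_mem_nhds _ hε)).forall_Ioo_of_prod_nhdsGT (p := fun c x =>
        |c / (f x * √(f x + c)) * (2 * √(f x₀ - f x) / -f' x) - 1 / √(a * f x₀)| ≤ ε)
      hρlim, hρ, hρu, hcM] with c hφ hρc hρcu hc x hx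
    obtain ⟨⟨-, hneg⟩, hx'⟩ := hsub ⟨hx.1, hx.2.trans hρcu⟩
    exact abs_div_mul_sqrt_sq_sub_sq_sub_le hc.1
      (hρc.2 ▸ hanti (Ioo_subset_Icc_self hx') (Ioo_subset_Icc_self hρc.1) hx.2) (hfM x hx')
      hneg (hφ x hx)
  convert tendsto_intervalIntegral_of_abs_sub_mul_le (hρ.mono fun c hc => hc.1.1.le) hint
    hweight (by positivity) hclose using 2
  ring

theorem tendsto_integral_clairaut_of_strictMonoOn {f f' ρ : ℝ → ℝ} {x₀ b M a : ℝ} (ha : 0 < a)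
    (hM : 0 < M) (hx₀ : f x₀ = M) (hcont : ContinuousOn f (Icc b x₀))
    (hmono : StrictMonoOn f (Icc b x₀))
    (hderiv : ∀ᶠ x in 𝓝[<] x₀, HasDerivAt f (f' x) x ∧ 0 < f' x)
    (hlim : Tendsto (fun x => f' x ^ 2 / (M - f x)) (𝓝[<] x₀) (𝓝 (2 * a)))
    (hρ : ∀ᶠ c in 𝓝[<] M, ρ c ∈ Ioo b x₀ ∧ f (ρ c) = c)
    (hint : ∀ᶠ c in 𝓝[<] M,
      IntervalIntegrable (fun x => c / (f x * √(f x ^ 2 - c ^ 2))) volume (ρ c) x₀) :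
    Tendsto (fun c => ∫ x in ρ c..x₀, c / (f x * √(f x ^ 2 - c ^ 2))) (𝓝[<] M)
      (𝓝 (π / (2 * √(a * M)))) := by
  have hmaps : MapsTo (fun x => -x) (Icc (-x₀) (-b)) (Icc b x₀) := fun x hx =>
    ⟨le_neg.1 hx.2, neg_le.1 hx.1⟩
  have h := tendsto_integral_clairaut_of_strictAntiOn (f := fun x => f (-x))
    (f' := fun x => -f' (-x)) (ρ := fun c => -ρ c) ha hM (by rwa [neg_neg])
    (hcont.comp continuousOn_neg hmaps)
    (fun x hx y hy hxy => hmono (hmaps hy) (hmaps hx) (neg_lt_neg hxy))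
    ((tendsto_neg_nhdsGT_neg.eventually hderiv).mono fun x hx =>
      ⟨(hx.1.comp x (hasDerivAt_neg x)).congr_deriv (mul_neg_one _), neg_lt_zero.2 hx.2⟩)
    (by simpa only [neg_sq, Function.comp_def] using hlim.comp tendsto_neg_nhdsGT_neg)
    (hρ.mono fun c hc => ⟨⟨neg_lt_neg hc.1.2, neg_lt_neg hc.1.1⟩, by simpa using hc.2⟩)
    (hint.mono fun c hc => ((IntervalIntegrable.iff_comp_neg enorm_ne_top).1 hc).symm)
  refine h.congr fun c => ?_
  rw [intervalIntegral.integral_comp_neg (fun x => c / (f x * √(f x ^ 2 - c ^ 2))), neg_neg,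
    neg_neg]

theorem tendsto_integral_clairaut {f f' f'' ρ₁ ρ₂ : ℝ → ℝ} {x₀ b₁ b₂ : ℝ} (hM : 0 < f x₀)
    (hcont : ContinuousOn f (Icc b₁ b₂)) (hmono : StrictMonoOn f (Icc b₁ x₀))
    (hanti : StrictAntiOn f (Icc x₀ b₂))
    (hderiv : ∀ᶠ x in 𝓝 x₀, HasDerivAt f (f' x) x ∧ HasDerivAt f' (f'' x) x)
    (hf''cont : ContinuousAt f'' x₀) (hf'' : f'' x₀ < 0)
    (hρ : ∀ᶠ c in 𝓝[<] f x₀, (ρ₁ c ∈ Ioo b₁ x₀ ∧ f (ρ₁ c) = c) ∧ ρ₂ c ∈ Ioo x₀ b₂ ∧ f (ρ₂ c) = c)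
    (hint : ∀ᶠ c in 𝓝[<] f x₀,
      IntervalIntegrable (fun x => c / (f x * √(f x ^ 2 - c ^ 2))) volume (ρ₁ c) (ρ₂ c)) :
    Tendsto (fun c => ∫ x in ρ₁ c..ρ₂ c, c / (f x * √(f x ^ 2 - c ^ 2))) (𝓝[<] f x₀)
      (𝓝 (π / √(-f'' x₀ * f x₀))) := by
  obtain ⟨c₀, ⟨hρ₁, -⟩, hρ₂, -⟩ := hρ.exists
  have hb₁ : b₁ < x₀ := hρ₁.1.trans hρ₁.2
  have hb₂ : x₀ < b₂ := hρ₂.1.trans hρ₂.2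
  have hmax : IsLocalMax f x₀ := by
    filter_upwards [Ioo_mem_nhds hb₁ hb₂] with x hx
    rcases le_total x x₀ with h | h
    · exact hmono.monotoneOn ⟨hx.1.le, h⟩ ⟨hb₁.le, le_rfl⟩ h
    · exact hanti.antitoneOn ⟨le_rfl, hb₂.le⟩ ⟨h, hx.2.le⟩ h
  have hf'₀ : f' x₀ = 0 := hmax.hasDerivAt_eq_zero hderiv.self_of_nhds.1
  obtain ⟨hpos, hneg⟩ := hderiv.self_of_nhds.2.eventually_pos_nhdsLT_and_neg_nhdsGT hf'₀ hf''
  have hlim := tendsto_sq_deriv_div_sub_nhdsNE hderiv hf'₀ hf''cont hf''.ne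
  have hsplit : ∀ᶠ c in 𝓝[<] f x₀,
      IntervalIntegrable (fun x => c / (f x * √(f x ^ 2 - c ^ 2))) volume (ρ₁ c) x₀ ∧
      IntervalIntegrable (fun x => c / (f x * √(f x ^ 2 - c ^ 2))) volume x₀ (ρ₂ c) := by
    filter_upwards [hρ, hint] with c hc hint
    have hx₀ : x₀ ∈ uIcc (ρ₁ c) (ρ₂ c) := mem_uIcc_of_le hc.1.1.2.le hc.2.1.1.le
    exact ⟨hint.mono_set (uIcc_subset_uIcc_left hx₀), hint.mono_set (uIcc_subset_uIcc_right hx₀)⟩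
  have hleft := tendsto_integral_clairaut_of_strictMonoOn (neg_pos.2 hf'') hM rfl
    (hcont.mono (Icc_subset_Icc_right hb₂.le)) hmono
    ((hderiv.filter_mono nhdsWithin_le_nhds).and hpos |>.mono fun x hx => ⟨hx.1.1, hx.2⟩)
    (hlim.mono_left (nhdsWithin_mono _ fun x hx => ne_of_lt hx)) (hρ.mono fun c hc => hc.1)
    (hsplit.mono fun c hc => hc.1)
  have hright := tendsto_integral_clairaut_of_strictAntiOn (neg_pos.2 hf'') hM rfl
    (hcont.mono (Icc_subset_Icc_left hb₁.le)) hanti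
    ((hderiv.filter_mono nhdsWithin_le_nhds).and hneg |>.mono fun x hx => ⟨hx.1.1, hx.2⟩)
    (hlim.mono_left (nhdsWithin_mono _ fun x hx => ne_of_gt hx)) (hρ.mono fun c hc => hc.2)
    (hsplit.mono fun c hc => hc.2)
  rw [← add_halves (π / √(-f'' x₀ * f x₀)), div_div, mul_comm _ (2 : ℝ)]
  refine (hleft.add hright).congr' ?_
  filter_upwards [hsplit] with c hc
  exact intervalIntegral.integral_add_adjacent_intervals hc.1 hc.2

theorem period_limit_at_max_general
    (f : ℝ → ℝ) (rstar : ℝ) (r₁ r₂ : ℝ → ℝ)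
    (hcont : ContinuousOn f (Set.Icc 0 1))
    (hfpos : ∀ r ∈ Set.Ioo (0 : ℝ) 1, 0 < f r)
    (hrstar : rstar ∈ Set.Ioo (0 : ℝ) 1)
    (hmono : StrictMonoOn f (Set.Icc 0 rstar))
    (hanti : StrictAntiOn f (Set.Icc rstar 1))
    (hr₁ : ∀ c ∈ Set.Ioo 0 (f rstar), r₁ c ∈ Set.Ioo 0 rstar ∧ f (r₁ c) = c)
    (hr₂ : ∀ c ∈ Set.Ioo 0 (f rstar), r₂ c ∈ Set.Ioo rstar 1 ∧ f (r₂ c) = c)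
    (hint : ∀ c ∈ Set.Ioo 0 (f rstar),
      IntervalIntegrable (fun r => c / (f r * Real.sqrt ((f r) ^ 2 - c ^ 2)))
        volume (r₁ c) (r₂ c))
    (hC2 : ∃ ε > 0, ContDiffOn ℝ 2 f (Set.Ioo (rstar - ε) (rstar + ε)))
    (hf'' : deriv (deriv f) rstar < 0) :
    Filter.Tendsto
      (fun c => 2 * ∫ r in (r₁ c)..(r₂ c), c / (f r * Real.sqrt ((f r) ^ 2 - c ^ 2)))
      (nhdsWithin (f rstar) (Set.Iio (f rstar)))
      (nhds (2 * Real.pi / Real.sqrt (-(deriv (deriv f) rstar) * f rstar))) := by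
  obtain ⟨ε, hε, hC2⟩ := hC2
  have hM : 0 < f rstar := hfpos rstar hrstar
  obtain ⟨hderiv, hf''cont⟩ :=
    hC2.eventually_hasDerivAt_deriv_deriv isOpen_Ioo (x₀ := rstar) ⟨by linarith, by linarith⟩
  have hc : ∀ᶠ c in 𝓝[<] f rstar, c ∈ Ioo 0 (f rstar) := Ioo_mem_nhdsLT hM
  rw [mul_div_assoc]
  exact (tendsto_integral_clairaut hM hcont hmono hanti hderiv hf''cont hf''
    (hc.mono fun c hc => ⟨hr₁ c hc, hr₂ c hc⟩) (hc.mono hint)).const_mul 2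

/-- For the metric `ds² = dr² + f(r)²dθ²` on a two-sphere, with profile `f` vanishing at the
endpoints with one-sided derivatives `f′(0) = 1` and `f′(1) = −β` and a unique interior
maximum at `r*`, the θ-period `Ω_c = 2∫_{r₁(c)}^{r₂(c)} c/(f·√(f²−c²)) dr` of the geodesic
with Clairaut constant `c` satisfies, when `f` is additionally `C²` near `r*` with
`f″(r*) < 0`, `Ω_c → 2π/√(−f″(r*)·f(r*))` as `c → f(r*)⁻`. -/
theorem period_limit_at_max
    (f : ℝ → ℝ) (β rstar : ℝ) (r₁ r₂ : ℝ → ℝ)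
    (hβ : 0 < β)
    (hcont : ContinuousOn f (Set.Icc 0 1))
    (hf0 : f 0 = 0) (hf1 : f 1 = 0)
    (hfpos : ∀ r ∈ Set.Ioo (0 : ℝ) 1, 0 < f r)
    (hdiff : ContDiffOn ℝ 1 f (Set.Ioo 0 1))
    (hd0 : HasDerivWithinAt f 1 (Set.Ici 0) 0)
    (hd1 : HasDerivWithinAt f (-β) (Set.Iic 1) 1)
    (hrstar : rstar ∈ Set.Ioo (0 : ℝ) 1)
    (hmono : StrictMonoOn f (Set.Icc 0 rstar))
    (hanti : StrictAntiOn f (Set.Icc rstar 1))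
    (hr₁ : ∀ c ∈ Set.Ioo 0 (f rstar), r₁ c ∈ Set.Ioo 0 rstar ∧ f (r₁ c) = c)
    (hr₂ : ∀ c ∈ Set.Ioo 0 (f rstar), r₂ c ∈ Set.Ioo rstar 1 ∧ f (r₂ c) = c)
    (hint : ∀ c ∈ Set.Ioo 0 (f rstar),
      IntervalIntegrable (fun r => c / (f r * Real.sqrt ((f r) ^ 2 - c ^ 2)))
        volume (r₁ c) (r₂ c))
    (hC2 : ∃ ε > 0, ContDiffOn ℝ 2 f (Set.Ioo (rstar - ε) (rstar + ε)))
    (hf'' : deriv (deriv f) rstar < 0) :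
    Filter.Tendsto
      (fun c => 2 * ∫ r in (r₁ c)..(r₂ c), c / (f r * Real.sqrt ((f r) ^ 2 - c ^ 2)))
      (nhdsWithin (f rstar) (Set.Iio (f rstar)))
      (nhds (2 * Real.pi / Real.sqrt (-(deriv (deriv f) rstar) * f rstar))) :=
  period_limit_at_max_general f rstar r₁ r₂ hcont hfpos hrstar hmono hanti hr₁ hr₂ hint hC2 hf''
end

section
/- Let t ↦ (x(t),y(t)) be a geodesic of the square metric defined on an interval [t₁,t₂], with x(t₁) = 0 = x(t₂), and suppose |y(t)| ≥ |x(t)| for every t ∈ [t₁,t₂]. Then x(t) = 0 for all t ∈ [t₁,t₂], i.e. the geodesic is (an arc of) the y-axis. -/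
/-!
If `x` does not vanish identically, the symmetries `x ↦ -x` and `y ↦ -y` of the geodesic
equations give an arc `(a, b)` between two zeros of `x` on which `x > 0`, hence `y > 0` because
`|y| ≥ |x|`. There the weighted Wronskian `W = (1 - y²)(x'y - xy')` satisfies
`y (1 - x²) W' = x ((y² - x²) y'² + (1 - y²)(x'y - xy')²) ≥ 0`, so `W` is nondecreasing, while
`W a = (1 - y a²) x'(a) y(a) ≥ 0 ≥ W b`. Thus `W = 0` on `[a, b]`, and at a Rolle point `c` of `x`
this forces `y'(c) = 0` too. The conserved energy `(1 - y²) x'² + (1 - x²) y'²` then vanishes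
identically, so `x' = 0` and `x = x t₁ = 0` throughout.
-/

open Set

theorem exists_first_zero_of_pos {f : ℝ → ℝ} {s b : ℝ} (hsb : s ≤ b)
    (hf : ContinuousOn f (Icc s b)) (hfs : 0 < f s) (hfb : f b = 0) :
    ∃ c ∈ Ioc s b, f c = 0 ∧ ∀ t ∈ Ico s c, 0 < f t := by
  set Z := Icc s b ∩ f ⁻¹' {0}
  have hZ : IsCompact Z := isCompact_Icc.of_isClosed_subset
    (hf.preimage_isClosed_of_isClosed isClosed_Icc isClosed_singleton) inter_subset_left
  obtain ⟨⟨hsc, hcb⟩, hfc⟩ : sInf Z ∈ Z := hZ.sInf_mem ⟨b, ⟨hsb, le_rfl⟩, hfb⟩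
  refine ⟨sInf Z, ⟨hsc.lt_of_ne ?_, hcb⟩, hfc, fun t ht => ?_⟩
  · exact fun h => hfs.ne' (by rw [h]; exact hfc)
  by_contra! hft
  obtain ⟨z, hz, hfz⟩ := intermediate_value_Icc' ht.1
    (hf.mono (Icc_subset_Icc_right (ht.2.le.trans hcb))) ⟨hft, hfs.le⟩
  exact (csInf_le hZ.bddBelow ⟨⟨hz.1, hz.2.trans (ht.2.le.trans hcb)⟩, hfz⟩).not_gt
    (hz.2.trans_lt ht.2)

theorem exists_Ioo_pos_between_zeros {f : ℝ → ℝ} {a b s : ℝ} (hf : ContinuousOn f (Icc a b))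
    (hfa : f a = 0) (hfb : f b = 0) (hs : s ∈ Icc a b) (hfs : 0 < f s) :
    ∃ a' b', s ∈ Ioo a' b' ∧ Icc a' b' ⊆ Icc a b ∧ f a' = 0 ∧ f b' = 0 ∧
      ∀ t ∈ Ioo a' b', 0 < f t := by
  obtain ⟨b', ⟨hsb', hb'b⟩, hfb', hpos_right⟩ :=
    exists_first_zero_of_pos hs.2 (hf.mono (Icc_subset_Icc_left hs.1)) hfs hfb
  obtain ⟨a'', ⟨hsa'', ha''a⟩, hfa'', hpos_left⟩ :=
    exists_first_zero_of_pos (f := fun t => f (-t)) (neg_le_neg hs.1)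
      (hf.comp continuousOn_neg fun t ht => ⟨le_neg_of_le_neg ht.2, hs.2.trans' (neg_le.1 ht.1)⟩)
      (by simpa using hfs) (by simpa using hfa)
  refine ⟨-a'', b', ⟨neg_lt.1 hsa'', hsb'⟩, Icc_subset_Icc (le_neg_of_le_neg ha''a) hb'b,
    hfa'', hfb', fun t ht => ?_⟩
  rcases le_or_gt t s with hts | hst
  · simpa using hpos_left (-t) ⟨neg_le_neg hts, neg_lt.1 ht.1⟩
  · exact hpos_right t ⟨hst.le, ht.2⟩

theorem IsMinOn.sub_mul_nonneg_of_hasDerivAt {f : ℝ → ℝ} {f' a c : ℝ}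
    (hmin : IsMinOn f (uIcc a c) a) (hf : HasDerivAt f f' a) : 0 ≤ (c - a) * f' := by
  have hc : c - a ∈ posTangentConeAt (uIcc a c) a :=
    mem_posTangentConeAt_of_segment_subset (by rw [add_sub_cancel, segment_eq_uIcc])
  simpa [mul_comm] using hmin.localize.hasFDerivWithinAt_nonneg hf.hasFDerivAt.hasFDerivWithinAt hc

theorem IsMinOn.deriv_nonneg_left {f : ℝ → ℝ} {a b : ℝ} (hab : a < b)
    (hmin : IsMinOn f (Icc a b) a) (hf : DifferentiableAt ℝ f a) : 0 ≤ deriv f a := by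
  rw [← uIcc_of_le hab.le] at hmin
  exact nonneg_of_mul_nonneg_right (hmin.sub_mul_nonneg_of_hasDerivAt hf.hasDerivAt) (sub_pos.2 hab)

theorem IsMinOn.deriv_nonpos_right {f : ℝ → ℝ} {a b : ℝ} (hab : a < b)
    (hmin : IsMinOn f (Icc a b) b) (hf : DifferentiableAt ℝ f b) : deriv f b ≤ 0 := by
  rw [← uIcc_of_ge hab.le] at hmin
  exact nonpos_of_mul_nonneg_right (hmin.sub_mul_nonneg_of_hasDerivAt hf.hasDerivAt) (sub_neg.2 hab)

theorem Continuous.nonneg_on_Icc_of_pos_on_Ioo {f : ℝ → ℝ} {a b : ℝ} (hf : Continuous f)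
    (hab : a < b) (hpos : ∀ t ∈ Ioo a b, 0 < f t) : ∀ t ∈ Icc a b, 0 ≤ f t := by
  rw [← closure_Ioo hab.ne]
  exact closure_minimal (fun t ht => (hpos t ht).le) (isClosed_le continuous_const hf)

structure IsSquareGeodesicOn (x y : ℝ → ℝ) (s : Set ℝ) : Prop where
  contDiff_fst : ContDiff ℝ 2 x
  contDiff_snd : ContDiff ℝ 2 y
  abs_fst_lt_one : ∀ t ∈ s, |x t| < 1
  abs_snd_lt_one : ∀ t ∈ s, |y t| < 1
  deriv_deriv_fst : ∀ t ∈ s, deriv (deriv x) t =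
    2 * y t / (1 - (y t) ^ 2) * deriv x t * deriv y t - x t / (1 - (y t) ^ 2) * (deriv y t) ^ 2
  deriv_deriv_snd : ∀ t ∈ s, deriv (deriv y) t =
    -(y t) / (1 - (x t) ^ 2) * (deriv x t) ^ 2 + 2 * x t / (1 - (x t) ^ 2) * deriv x t * deriv y t

noncomputable def squareEnergy (x y : ℝ → ℝ) (t : ℝ) : ℝ :=
  (1 - y t ^ 2) * deriv x t ^ 2 + (1 - x t ^ 2) * deriv y t ^ 2

noncomputable def weightedWronskian (x y : ℝ → ℝ) (t : ℝ) : ℝ :=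
  (1 - y t ^ 2) * (deriv x t * y t - x t * deriv y t)

theorem hasDerivAt_squareEnergy {x y : ℝ → ℝ} (hx : ContDiff ℝ 2 x) (hy : ContDiff ℝ 2 y) (t : ℝ) :
    HasDerivAt (squareEnergy x y)
      (-2 * y t * deriv y t * deriv x t ^ 2 + 2 * (1 - y t ^ 2) * deriv x t * deriv (deriv x) t
        - 2 * x t * deriv x t * deriv y t ^ 2
        + 2 * (1 - x t ^ 2) * deriv y t * deriv (deriv y) t) t := by
  have hx' := (hx.differentiable two_ne_zero t).hasDerivAt
  have hy' := (hy.differentiable two_ne_zero t).hasDerivAt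
  have hx'' := (hx.differentiable_deriv_two t).hasDerivAt
  have hy'' := (hy.differentiable_deriv_two t).hasDerivAt
  unfold squareEnergy
  refine ((((hy'.fun_pow 2).const_sub 1).fun_mul (hx''.fun_pow 2)).fun_add
    (((hx'.fun_pow 2).const_sub 1).fun_mul (hy''.fun_pow 2))).congr_deriv ?_
  simp only [Nat.cast_ofNat, Nat.add_one_sub_one, pow_one]
  ring

theorem hasDerivAt_weightedWronskian {x y : ℝ → ℝ} (hx : ContDiff ℝ 2 x) (hy : ContDiff ℝ 2 y)
    (t : ℝ) :
    HasDerivAt (weightedWronskian x y)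
      (-2 * y t * deriv y t * (deriv x t * y t - x t * deriv y t)
        + (1 - y t ^ 2) * (deriv (deriv x) t * y t - x t * deriv (deriv y) t)) t := by
  have hx' := (hx.differentiable two_ne_zero t).hasDerivAt
  have hy' := (hy.differentiable two_ne_zero t).hasDerivAt
  have hx'' := (hx.differentiable_deriv_two t).hasDerivAt
  have hy'' := (hy.differentiable_deriv_two t).hasDerivAt
  unfold weightedWronskian
  refine (((hy'.fun_pow 2).const_sub 1).fun_mul
    ((hx''.fun_mul hy').fun_sub (hx'.fun_mul hy''))).congr_deriv ?_
  simp only [Nat.cast_ofNat, Nat.add_one_sub_one, pow_one]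
  ring

namespace IsSquareGeodesicOn

variable {x y : ℝ → ℝ} {s : Set ℝ} {t : ℝ}

theorem mono {s' : Set ℝ} (hγ : IsSquareGeodesicOn x y s) (h : s' ⊆ s) :
    IsSquareGeodesicOn x y s' :=
  ⟨hγ.contDiff_fst, hγ.contDiff_snd, fun t ht => hγ.abs_fst_lt_one t (h ht),
    fun t ht => hγ.abs_snd_lt_one t (h ht), fun t ht => hγ.deriv_deriv_fst t (h ht),
    fun t ht => hγ.deriv_deriv_snd t (h ht)⟩

theorem neg_fst (hγ : IsSquareGeodesicOn x y s) : IsSquareGeodesicOn (fun t => -x t) y s := by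
  have hderiv : deriv (fun t => -x t) = fun t => -deriv x t := funext fun _ => deriv.fun_neg
  refine ⟨hγ.contDiff_fst.neg, hγ.contDiff_snd, fun t ht => ?_, hγ.abs_snd_lt_one,
    fun t ht => ?_, fun t ht => ?_⟩
  · rw [abs_neg]; exact hγ.abs_fst_lt_one t ht
  · rw [hderiv, deriv.fun_neg, hγ.deriv_deriv_fst t ht]; ring
  · rw [hderiv, hγ.deriv_deriv_snd t ht]; ring

theorem neg_snd (hγ : IsSquareGeodesicOn x y s) : IsSquareGeodesicOn x (fun t => -y t) s := by
  have hderiv : deriv (fun t => -y t) = fun t => -deriv y t := funext fun _ => deriv.fun_neg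
  refine ⟨hγ.contDiff_fst, hγ.contDiff_snd.neg, hγ.abs_fst_lt_one, fun t ht => ?_,
    fun t ht => ?_, fun t ht => ?_⟩
  · rw [abs_neg]; exact hγ.abs_snd_lt_one t ht
  · rw [hderiv, hγ.deriv_deriv_fst t ht]; ring
  · rw [hderiv, deriv.fun_neg, hγ.deriv_deriv_snd t ht]; ring

theorem one_sub_sq_fst_pos (hγ : IsSquareGeodesicOn x y s) (ht : t ∈ s) : 0 < 1 - x t ^ 2 :=
  sub_pos.2 ((sq_lt_one_iff_abs_lt_one _).2 (hγ.abs_fst_lt_one t ht))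

theorem one_sub_sq_snd_pos (hγ : IsSquareGeodesicOn x y s) (ht : t ∈ s) : 0 < 1 - y t ^ 2 :=
  sub_pos.2 ((sq_lt_one_iff_abs_lt_one _).2 (hγ.abs_snd_lt_one t ht))

theorem one_sub_sq_mul_deriv_deriv_fst (hγ : IsSquareGeodesicOn x y s) (ht : t ∈ s) :
    (1 - y t ^ 2) * deriv (deriv x) t = 2 * y t * deriv x t * deriv y t - x t * deriv y t ^ 2 := by
  rw [hγ.deriv_deriv_fst t ht]
  field_simp [(hγ.one_sub_sq_snd_pos ht).ne']

theorem one_sub_sq_mul_deriv_deriv_snd (hγ : IsSquareGeodesicOn x y s) (ht : t ∈ s) :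
    (1 - x t ^ 2) * deriv (deriv y) t = -y t * deriv x t ^ 2 + 2 * x t * deriv x t * deriv y t := by
  rw [hγ.deriv_deriv_snd t ht]
  field_simp [(hγ.one_sub_sq_fst_pos ht).ne']

theorem hasDerivAt_squareEnergy_zero (hγ : IsSquareGeodesicOn x y s) (ht : t ∈ s) :
    HasDerivAt (squareEnergy x y) 0 t := by
  convert hasDerivAt_squareEnergy hγ.contDiff_fst hγ.contDiff_snd t using 1
  linear_combination (-2 * deriv x t) * hγ.one_sub_sq_mul_deriv_deriv_fst ht
    - 2 * deriv y t * hγ.one_sub_sq_mul_deriv_deriv_snd ht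

theorem mul_deriv_weightedWronskian (hγ : IsSquareGeodesicOn x y s) (ht : t ∈ s) :
    y t * (1 - x t ^ 2) * deriv (weightedWronskian x y) t =
      x t * ((y t ^ 2 - x t ^ 2) * deriv y t ^ 2
        + (1 - y t ^ 2) * (deriv x t * y t - x t * deriv y t) ^ 2) := by
  rw [(hasDerivAt_weightedWronskian hγ.contDiff_fst hγ.contDiff_snd t).deriv]
  linear_combination (y t ^ 2 * (1 - x t ^ 2)) * hγ.one_sub_sq_mul_deriv_deriv_fst ht
    - (x t * y t * (1 - y t ^ 2)) * hγ.one_sub_sq_mul_deriv_deriv_snd ht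

theorem monotoneOn_weightedWronskian {a b : ℝ} (hγ : IsSquareGeodesicOn x y (Icc a b))
    (hx : ∀ t ∈ Ioo a b, 0 < x t) (hy : ∀ t ∈ Ioo a b, 0 < y t)
    (hxy : ∀ t ∈ Ioo a b, |x t| ≤ |y t|) : MonotoneOn (weightedWronskian x y) (Icc a b) := by
  have hW := hasDerivAt_weightedWronskian hγ.contDiff_fst hγ.contDiff_snd
  refine monotoneOn_of_deriv_nonneg (convex_Icc a b)
    (continuous_iff_continuousAt.2 fun t => (hW t).continuousAt).continuousOn
    (fun t _ => (hW t).differentiableAt.differentiableWithinAt) fun t ht => ?_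
  rw [interior_Icc] at ht
  have hyx : 0 < y t * (1 - x t ^ 2) :=
    mul_pos (hy t ht) (hγ.one_sub_sq_fst_pos (Ioo_subset_Icc_self ht))
  refine nonneg_of_mul_nonneg_right ?_ hyx
  rw [hγ.mul_deriv_weightedWronskian (Ioo_subset_Icc_self ht)]
  exact mul_nonneg (hx t ht).le (add_nonneg
    (mul_nonneg (sub_nonneg.2 (sq_le_sq.2 (hxy t ht))) (sq_nonneg _))
    (mul_nonneg (hγ.one_sub_sq_snd_pos (Ioo_subset_Icc_self ht)).le (sq_nonneg _)))

theorem squareEnergy_eq {a b : ℝ} (hγ : IsSquareGeodesicOn x y (Icc a b)) :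
    ∀ t ∈ Icc a b, squareEnergy x y t = squareEnergy x y a :=
  constant_of_has_deriv_right_zero
    (continuous_iff_continuousAt.2 fun t =>
      (hasDerivAt_squareEnergy hγ.contDiff_fst hγ.contDiff_snd t).continuousAt).continuousOn
    fun _ ht => (hγ.hasDerivAt_squareEnergy_zero (Ico_subset_Icc_self ht)).hasDerivWithinAt

theorem fst_eq_of_rest_point {a b c : ℝ} (hγ : IsSquareGeodesicOn x y (Icc a b))
    (hc : c ∈ Icc a b) (hxc : deriv x c = 0) (hyc : deriv y c = 0) :
    ∀ t ∈ Icc a b, x t = x a := by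
  refine constant_of_has_deriv_right_zero hγ.contDiff_fst.continuous.continuousOn fun t ht => ?_
  have ht := Ico_subset_Icc_self ht
  have hE : squareEnergy x y t = 0 := by
    rw [hγ.squareEnergy_eq t ht, ← hγ.squareEnergy_eq c hc, squareEnergy, hxc, hyc]
    ring
  have hxt : (1 - y t ^ 2) * deriv x t ^ 2 = 0 :=
    ((add_eq_zero_iff_of_nonneg (by have := hγ.one_sub_sq_snd_pos ht; positivity)
      (by have := hγ.one_sub_sq_fst_pos ht; positivity)).1 hE).1
  have hx't : deriv x t = 0 := by
    simpa [(hγ.one_sub_sq_snd_pos ht).ne'] using hxt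
  rw [← hx't]
  exact (hγ.contDiff_fst.differentiable two_ne_zero t).hasDerivAt.hasDerivWithinAt

theorem exists_rest_point_of_pos {a b : ℝ} (hγ : IsSquareGeodesicOn x y (Icc a b)) (hab : a < b)
    (hxa : x a = 0) (hxb : x b = 0) (hx : ∀ t ∈ Ioo a b, 0 < x t) (hy : ∀ t ∈ Ioo a b, 0 < y t)
    (hxy : ∀ t ∈ Ioo a b, |x t| ≤ |y t|) : ∃ c ∈ Ioo a b, deriv x c = 0 ∧ deriv y c = 0 := by
  have hx₀ := hγ.contDiff_fst.continuous.nonneg_on_Icc_of_pos_on_Ioo hab hx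
  have hy₀ := hγ.contDiff_snd.continuous.nonneg_on_Icc_of_pos_on_Ioo hab hy
  have hdx := hγ.contDiff_fst.differentiable two_ne_zero
  have ha := left_mem_Icc.2 hab.le
  have hb := right_mem_Icc.2 hab.le
  have hWa : 0 ≤ weightedWronskian x y a := by
    have hx'a := IsMinOn.deriv_nonneg_left hab (fun t ht => by simpa [hxa] using hx₀ t ht) (hdx a)
    rw [weightedWronskian, hxa, zero_mul, sub_zero]
    exact mul_nonneg (hγ.one_sub_sq_snd_pos ha).le (mul_nonneg hx'a (hy₀ a ha))
  have hWb : weightedWronskian x y b ≤ 0 := by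
    have hx'b := IsMinOn.deriv_nonpos_right hab (fun t ht => by simpa [hxb] using hx₀ t ht) (hdx b)
    rw [weightedWronskian, hxb, zero_mul, sub_zero]
    exact mul_nonpos_of_nonneg_of_nonpos (hγ.one_sub_sq_snd_pos hb).le
      (mul_nonpos_of_nonpos_of_nonneg hx'b (hy₀ b hb))
  obtain ⟨c, hc, hxc⟩ := exists_deriv_eq_zero hab hγ.contDiff_fst.continuous.continuousOn
    (hxa.trans hxb.symm)
  have hc' := Ioo_subset_Icc_self hc
  have hmono := hγ.monotoneOn_weightedWronskian hx hy hxy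
  have hWc : weightedWronskian x y c = 0 :=
    le_antisymm ((hmono hc' hb hc.2.le).trans hWb) (hWa.trans (hmono ha hc' hc.1.le))
  rw [weightedWronskian, hxc, zero_mul, zero_sub, mul_neg, neg_eq_zero] at hWc
  refine ⟨c, hc, hxc, ?_⟩
  simpa [(hγ.one_sub_sq_snd_pos hc').ne', (hx c hc).ne'] using hWc

theorem exists_rest_point {t₁ t₂ s : ℝ} (hγ : IsSquareGeodesicOn x y (Icc t₁ t₂))
    (h₁ : x t₁ = 0) (h₂ : x t₂ = 0) (hxy : ∀ t ∈ Icc t₁ t₂, |x t| ≤ |y t|) (hs : s ∈ Icc t₁ t₂)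
    (hxs : x s ≠ 0) : ∃ c ∈ Icc t₁ t₂, deriv x c = 0 ∧ deriv y c = 0 := by
  wlog hxs_pos : 0 < x s generalizing x
  · obtain ⟨c, hc, hxc, hyc⟩ := this hγ.neg_fst (by simp [h₁]) (by simp [h₂]) (by simpa using hxy)
      (by simpa using hxs) (by simpa using lt_of_le_of_ne (not_lt.1 hxs_pos) hxs)
    exact ⟨c, hc, by simpa using hxc, hyc⟩
  obtain ⟨a, b, hsab, hab, hxa, hxb, hx_pos⟩ :=
    exists_Ioo_pos_between_zeros hγ.contDiff_fst.continuous.continuousOn h₁ h₂ hs hxs_pos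
  have hy_ne : ∀ t ∈ Ioo a b, y t ≠ 0 := fun t ht hyt => by
    have := hxy t (hab (Ioo_subset_Icc_self ht))
    rw [hyt, abs_zero] at this
    exact (abs_pos.2 (hx_pos t ht).ne').not_ge this
  wlog hys : 0 < y s generalizing y
  · obtain ⟨c, hc, hxc, hyc⟩ := this hγ.neg_snd (by simpa using hxy)
      (by simpa using hy_ne) (by simpa using lt_of_le_of_ne (not_lt.1 hys) (hy_ne s hsab))
    exact ⟨c, hc, hxc, by simpa using hyc⟩
  have hy_pos : ∀ t ∈ Ioo a b, 0 < y t := fun t ht => by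
    by_contra! hyt
    obtain ⟨z, hz, hyz⟩ := isPreconnected_Ioo.intermediate_value ht hsab
      hγ.contDiff_snd.continuous.continuousOn ⟨hyt, hys.le⟩
    exact hy_ne z hz hyz
  obtain ⟨c, hc, hrest⟩ := (hγ.mono hab).exists_rest_point_of_pos (hsab.1.trans hsab.2) hxa hxb
    hx_pos hy_pos fun t ht => hxy t (hab (Ioo_subset_Icc_self ht))
  exact ⟨c, hab (Ioo_subset_Icc_self hc), hrest⟩

end IsSquareGeodesicOn

theorem geodesic_meeting_axis_twice_is_axis_general
    (x y : ℝ → ℝ) (t₁ t₂ : ℝ)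
    (hx : ContDiff ℝ 2 x) (hy : ContDiff ℝ 2 y)
    (hsq : ∀ t ∈ Set.Icc t₁ t₂, |x t| < 1 ∧ |y t| < 1)
    (hgeo₁ : ∀ t ∈ Set.Icc t₁ t₂,
      deriv (deriv x) t =
        2 * y t / (1 - (y t) ^ 2) * deriv x t * deriv y t
          - x t / (1 - (y t) ^ 2) * (deriv y t) ^ 2)
    (hgeo₂ : ∀ t ∈ Set.Icc t₁ t₂,
      deriv (deriv y) t =
        -(y t) / (1 - (x t) ^ 2) * (deriv x t) ^ 2
          + 2 * x t / (1 - (x t) ^ 2) * deriv x t * deriv y t)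
    (hend₁ : x t₁ = 0) (hend₂ : x t₂ = 0)
    (hreg : ∀ t ∈ Set.Icc t₁ t₂, |x t| ≤ |y t|) :
    ∀ t ∈ Set.Icc t₁ t₂, x t = 0 := by
  have hγ : IsSquareGeodesicOn x y (Icc t₁ t₂) :=
    ⟨hx, hy, fun t ht => (hsq t ht).1, fun t ht => (hsq t ht).2, hgeo₁, hgeo₂⟩
  intro t ht
  by_contra hxt
  obtain ⟨c, hc, hxc, hyc⟩ := hγ.exists_rest_point hend₁ hend₂ hreg ht hxt
  exact hxt (by rw [hγ.fst_eq_of_rest_point hc hxc hyc t ht, hend₁])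

/-- A geodesic of the metric `ds² = (1−y²)dx² + (1−x²)dy²` on the open square that meets
the `y`-axis twice while remaining in the region `|y| ≥ |x|` must be (an arc of) the
`y`-axis. -/
theorem geodesic_meeting_axis_twice_is_axis
    (x y : ℝ → ℝ) (t₁ t₂ : ℝ) (ht : t₁ < t₂)
    (hx : ContDiff ℝ 2 x) (hy : ContDiff ℝ 2 y)
    (hsq : ∀ t ∈ Set.Icc t₁ t₂, |x t| < 1 ∧ |y t| < 1)
    (hgeo₁ : ∀ t ∈ Set.Icc t₁ t₂,
      deriv (deriv x) t =
        2 * y t / (1 - (y t) ^ 2) * deriv x t * deriv y t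
          - x t / (1 - (y t) ^ 2) * (deriv y t) ^ 2)
    (hgeo₂ : ∀ t ∈ Set.Icc t₁ t₂,
      deriv (deriv y) t =
        -(y t) / (1 - (x t) ^ 2) * (deriv x t) ^ 2
          + 2 * x t / (1 - (x t) ^ 2) * deriv x t * deriv y t)
    (hend₁ : x t₁ = 0) (hend₂ : x t₂ = 0)
    (hreg : ∀ t ∈ Set.Icc t₁ t₂, |x t| ≤ |y t|) :
    ∀ t ∈ Set.Icc t₁ t₂, x t = 0 :=
  geodesic_meeting_axis_twice_is_axis_general x y t₁ t₂ hx hy hsq hgeo₁ hgeo₂ hend₁ hend₂ hreg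
end

section
/- Let t ↦ (x(t),y(t)), defined on its maximal interval [0,T) (with values in the open square), be a unit-speed geodesic of the square metric with initial conditions x(0) = 0, 0 < y(0) < 1, ẏ(0) = 0 and ẋ(0) > 0. Then there exists t ∈ (0,T) with y(t) = x(t) or y(t) = −x(t); moreover, if t* denotes the first such time, then y is strictly decreasing on (0,t*]. -/
/-!
Along a geodesic, `q = (1 - x²) ẏ`, the momentum conjugate to `y`, satisfies `q' = -y ẋ²`.
Until the geodesic meets `y = ±x` it stays in the cone `|x| < y`, so `q` is antitone with
`q(0) = 0` and `q'(0) = -y(0) ẋ(0)² < 0`; hence `q < 0` and `ẏ = q / (1 - x²) < 0` there, which is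
the monotonicity claim. If the geodesic never met the diagonals, then for `t ≥ 1` we would have
`ẏ ≤ q ≤ q(1) < 0` while `y > 0`, so `T < ∞`; but then `(x, y)` stays in the compact square
`[-y(0), y(0)]²`, and Picard–Lindelöf for the geodesic equations, written as a first-order system
in `(x, y, ẋ, ẏ)`, continues it beyond `T`, contradicting maximality.
-/

open Set Filter Topology

section Calculus

variable {E F : Type*} [NormedAddCommGroup E] [NormedSpace ℝ E] [NormedAddCommGroup F]
  [NormedSpace ℝ F]

lemma HasDerivAt.prodFst {f : ℝ → E × F} {f' : E × F} {t : ℝ} (h : HasDerivAt f f' t) :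
    HasDerivAt (fun s => (f s).1) f'.1 t := by
  simpa using h.hasFDerivAt.fst.hasDerivAt

lemma HasDerivAt.prodSnd {f : ℝ → E × F} {f' : E × F} {t : ℝ} (h : HasDerivAt f f' t) :
    HasDerivAt (fun s => (f s).2) f'.2 t := by
  simpa using h.hasFDerivAt.snd.hasDerivAt

lemma one_sub_sq_pos_of_abs_lt_one {a : ℝ} (h : |a| < 1) : 0 < 1 - a ^ 2 :=
  sub_pos.2 ((sq_lt_one_iff_abs_lt_one a).2 h)

lemma contDiff_two_iff_deriv {f : ℝ → ℝ} :
    ContDiff ℝ 2 f ↔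
      Differentiable ℝ f ∧ Differentiable ℝ (deriv f) ∧ Continuous (deriv (deriv f)) := by
  rw [show (2 : WithTop ℕ∞) = 0 + 1 + 1 from rfl, contDiff_succ_iff_deriv, contDiff_succ_iff_deriv,
    contDiff_zero]
  simp

lemma contDiffOn_two_of_hasDerivAt {f f' f'' : ℝ → E} {I : Set ℝ} (hI : IsOpen I)
    (hf : ∀ t ∈ I, HasDerivAt f (f' t) t) (hf' : ∀ t ∈ I, HasDerivAt f' (f'' t) t)
    (hf'' : ContinuousOn f'' I) : ContDiffOn ℝ 2 f I := by
  have hderiv : EqOn (deriv f) f' I := fun t ht => (hf t ht).deriv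
  have hderiv' : EqOn (deriv f') f'' I := fun t ht => (hf' t ht).deriv
  have hC1 : ContDiffOn ℝ 1 f' I := by
    rw [show (1 : WithTop ℕ∞) = 0 + 1 from rfl, contDiffOn_succ_iff_deriv_of_isOpen hI]
    exact ⟨fun t ht => (hf' t ht).differentiableAt.differentiableWithinAt, by simp,
      contDiffOn_zero.2 (hf''.congr hderiv')⟩
  rw [show (2 : WithTop ℕ∞) = 1 + 1 from rfl, contDiffOn_succ_iff_deriv_of_isOpen hI]
  exact ⟨fun t ht => (hf t ht).differentiableAt.differentiableWithinAt, by simp,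
    hC1.congr hderiv⟩

lemma exists_contDiff_eqOn_Iio_eqOn_Ioo {n : ℕ∞} {f g : ℝ → E} {a c b' b : ℝ}
    (hac : a < c) (hcb' : c < b') (hb'b : b' < b) (hf : ContDiff ℝ n f)
    (hg : ContDiffOn ℝ n g (Ioo a b)) (hfg : EqOn f g (Ioo a c)) :
    ∃ h : ℝ → E, ContDiff ℝ n h ∧ EqOn h f (Iio c) ∧ EqOn h g (Ioo a b') := by
  set b'' := (b' + b) / 2
  set φ : ℝ → ℝ := fun t => Real.smoothTransition ((b'' - t) / (b'' - b'))
  have hb'' : 0 < b'' - b' := by simp only [b'']; linarith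
  have hφ : ContDiff ℝ n φ :=
    Real.smoothTransition.contDiff.comp ((contDiff_const.sub contDiff_id).div_const _)
  have hφ_one : ∀ t ≤ b', φ t = 1 := fun t ht =>
    Real.smoothTransition.one_of_one_le <| (one_le_div hb'').2 (by linarith)
  have hφ_zero : ∀ t ≥ b'', φ t = 0 := fun t ht =>
    Real.smoothTransition.zero_of_nonpos <| div_nonpos_of_nonpos_of_nonneg (by linarith) hb''.le
  set h : ℝ → E := fun t => if t < c then f t else φ t • g t
  have hh_f : EqOn h f (Iio c) := fun t ht => if_pos ht
  have hh_g : EqOn h (fun t => φ t • g t) (Ioo a b) := by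
    intro t ht
    by_cases htc : t < c
    · simp [h, htc, hφ_one t (by linarith), hfg ⟨ht.1, htc⟩]
    · simp [h, htc]
  refine ⟨h, contDiff_iff_contDiffAt.2 fun t => ?_, hh_f, fun t ht => ?_⟩
  · rcases lt_or_ge t c with htc | htc
    · exact hf.contDiffAt.congr_of_eventuallyEq (hh_f.eventuallyEq_of_mem (Iio_mem_nhds htc))
    rcases lt_or_ge t b with htb | htb
    · have ht : t ∈ Ioo a b := ⟨hac.trans_le htc, htb⟩
      exact (hφ.contDiffAt.smul (hg.contDiffAt (Ioo_mem_nhds ht.1 ht.2))).congr_of_eventuallyEq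
        (hh_g.eventuallyEq_of_mem (Ioo_mem_nhds ht.1 ht.2))
    · refine contDiffAt_const (c := (0 : E)).congr_of_eventuallyEq ?_
      filter_upwards [Ioi_mem_nhds (show b'' < t by simp only [b'']; linarith)] with s hs
      simp [h, show ¬ s < c by simp only [b'', mem_Ioi] at hs; linarith, hφ_zero s hs.le]
  · rw [hh_g ⟨ht.1, ht.2.trans hb'b⟩]
    simp only [hφ_one t ht.2.le, one_smul]

lemma AntitoneOn.lt_of_hasDerivWithinAt_neg {f : ℝ → ℝ} {a b f' : ℝ}
    (hf : AntitoneOn f (Ico a b)) (hd : HasDerivWithinAt f f' (Ici a) a) (hf' : f' < 0) :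
    ∀ t ∈ Ioo a b, f t < f a := by
  intro t ht
  obtain ⟨s, hs, hst⟩ := ((hd.Ioi_of_Ici.limsup_slope_le' (lt_irrefl a) hf').and
    (Ioo_mem_nhdsGT ht.1)).exists
  rw [slope_def_field, div_neg_iff] at hs
  have : f s < f a := by rcases hs with h | h <;> [linarith [h.2, hst.1]; linarith [h.1]]
  exact (hf ⟨hst.1.le, hst.2.trans ht.2⟩ ⟨ht.1.le, ht.2⟩ hst.2.le).trans_lt this

lemma abs_lt_of_forall_ne {x y : ℝ → ℝ} {b : ℝ} (hx : ContinuousOn x (Ico 0 b))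
    (hy : ContinuousOn y (Ico 0 b)) (h0 : |x 0| < y 0)
    (hne : ∀ t ∈ Ioo 0 b, y t ≠ x t ∧ y t ≠ -x t) : ∀ t ∈ Ico 0 b, |x t| < y t := by
  intro t ht
  by_contra! hle
  obtain ⟨c, hc, hc0⟩ : ∃ c ∈ Icc 0 t, y c - |x c| = 0 :=
    intermediate_value_Icc' (f := fun s => y s - |x s|) ht.1
      ((hy.sub hx.abs).mono (Icc_subset_Ico_right ht.2))
      ⟨by linarith, by linarith⟩
  have hc0' : c ≠ 0 := by rintro rfl; linarith
  have := hne c ⟨lt_of_le_of_ne hc.1 (Ne.symm hc0'), hc.2.trans_lt ht.2⟩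
  rcases abs_choice (x c) with h | h <;> [exact this.1 (by linarith); exact this.2 (by linarith)]

end Calculus

section ODE

variable {E : Type*} [NormedAddCommGroup E] [NormedSpace ℝ E] [CompleteSpace E]

theorem exists_hasDerivAt_eqOn_Ioc_of_contDiffAt {v : E → E} {F : ℝ → E} {a τ : ℝ}
    {s : Set E} (haτ : a < τ) (hv : ContDiffAt ℝ 1 v (F τ)) (hs : s ∈ 𝓝 (F τ))
    (hFc : ContinuousOn F (Icc a τ))
    (hF : ∀ t ∈ Ioc a τ, HasDerivWithinAt F (v (F t)) (Iic t) t) :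
    ∃ δ > 0, δ ≤ τ - a ∧ ∃ α : ℝ → E,
      (∀ t ∈ Ioo (τ - δ) (τ + δ), HasDerivAt α (v (α t)) t ∧ α t ∈ s) ∧
      EqOn F α (Ioc (τ - δ) τ) := by
  obtain ⟨α, hατ, ε, hε, hα⟩ :=
    hv.exists_forall_mem_closedBall_exists_eq_forall_mem_Ioo_hasDerivAt₀ τ
  obtain ⟨L, N, hN, hL⟩ := hv.exists_lipschitzOnWith
  have hαc : ContinuousAt α τ :=
    (hα τ ⟨by linarith, by linarith⟩).differentiableAt.continuousAt
  obtain ⟨δ₁, hδ₁, hαδ⟩ := Metric.eventually_nhds_iff.1 <|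
    (hαc.eventually_mem (hατ ▸ inter_mem hN hs)).and
      (Ioo_mem_nhds (show τ - ε < τ by linarith) (show τ < τ + ε by linarith))
  obtain ⟨δ₂, hδ₂, hFδ⟩ := Metric.mem_nhdsWithin_iff.1 <|
    hFc τ (right_mem_Icc.2 haτ.le) (inter_mem hN hs)
  obtain ⟨δ, hδ, hδ₁', hδ₂', hδa⟩ : ∃ δ > 0, δ < δ₁ ∧ δ < δ₂ ∧ δ < τ - a :=
    ⟨min (min δ₁ δ₂) (τ - a) / 2, by have := sub_pos.2 haτ; positivity, by grind,
      by grind, by grind⟩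
  have hαI : ∀ t ∈ Ioo (τ - δ) (τ + δ), HasDerivAt α (v (α t)) t ∧ α t ∈ N ∩ s := by
    intro t ht
    have h := hαδ (show dist t τ < δ₁ by rw [Real.dist_eq, abs_lt]; grind)
    exact ⟨hα t h.2, h.1⟩
  have hFI : ∀ t ∈ Icc (τ - δ) τ, F t ∈ N ∩ s := fun t ht =>
    hFδ ⟨Metric.mem_ball.2 (by rw [Real.dist_eq, abs_lt]; grind),
      ⟨by linarith [ht.1], ht.2⟩⟩
  have hsub : Icc (τ - δ / 2) τ ⊆ Ioo (τ - δ) (τ + δ) := fun u hu =>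
    ⟨by linarith [hu.1], by linarith [hu.2]⟩
  refine ⟨δ / 2, by positivity, by linarith, α,
    fun t ht => ⟨(hαI t ⟨by linarith [ht.1], by linarith [ht.2]⟩).1,
      (hαI t ⟨by linarith [ht.1], by linarith [ht.2]⟩).2.2⟩, fun t ht => ?_⟩
  exact ODE_solution_unique_of_mem_Icc_left (v := fun _ => v) (s := fun _ => N) (K := L)
    (fun _ _ => hL) (hFc.mono fun u hu => ⟨by linarith [hu.1], hu.2⟩)
    (fun u hu => hF u ⟨by linarith [hu.1], hu.2⟩)
    (fun u hu => (hFI u ⟨by linarith [hu.1], hu.2⟩).1)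
    (HasDerivAt.continuousOn fun u hu => (hαI u (hsub hu)).1)
    (fun u hu => (hαI u (hsub (Ioc_subset_Icc_self hu))).1.hasDerivWithinAt)
    (fun u hu => (hαI u (hsub (Ioc_subset_Icc_self hu))).2.1) hατ.symm ⟨ht.1.le, ht.2⟩

end ODE

noncomputable section

/-- The geodesic equations of `(1 - y²) dx² + (1 - x²) dy²` as a first-order system in
`p = (x, y, ẋ, ẏ)`. -/
def geodesicField (p : ℝ × ℝ × ℝ × ℝ) : ℝ × ℝ × ℝ × ℝ :=
  (p.2.2.1, p.2.2.2,
    2 * p.2.1 / (1 - p.2.1 ^ 2) * p.2.2.1 * p.2.2.2 - p.1 / (1 - p.2.1 ^ 2) * p.2.2.2 ^ 2,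
    -p.2.1 / (1 - p.1 ^ 2) * p.2.2.1 ^ 2 + 2 * p.1 / (1 - p.1 ^ 2) * p.2.2.1 * p.2.2.2)

def squareDomain : Set (ℝ × ℝ × ℝ × ℝ) := {p | |p.1| < 1 ∧ |p.2.1| < 1}

def jet (x y : ℝ → ℝ) (t : ℝ) : ℝ × ℝ × ℝ × ℝ := (x t, y t, deriv x t, deriv y t)

def energy (p : ℝ × ℝ × ℝ × ℝ) : ℝ :=
  (1 - p.2.1 ^ 2) * p.2.2.1 ^ 2 + (1 - p.1 ^ 2) * p.2.2.2 ^ 2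

/-- The momentum conjugate to `y` for the Lagrangian `((1 - y²) ẋ² + (1 - x²) ẏ²) / 2`. -/
def momentumY (x y : ℝ → ℝ) (t : ℝ) : ℝ := (1 - x t ^ 2) * deriv y t

end

lemma isOpen_squareDomain : IsOpen squareDomain :=
  (isOpen_lt (continuous_abs.comp continuous_fst) continuous_const).inter
    (isOpen_lt (continuous_abs.comp (continuous_fst.comp continuous_snd)) continuous_const)

lemma contDiffOn_geodesicField : ContDiffOn ℝ 1 geodesicField squareDomain := by
  intro p ⟨hx, hy⟩
  have h1 := (one_sub_sq_pos_of_abs_lt_one hx).ne'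
  have h2 := (one_sub_sq_pos_of_abs_lt_one hy).ne'
  unfold geodesicField
  apply ContDiffAt.contDiffWithinAt
  fun_prop (disch := assumption)

section Jet

variable {x y : ℝ → ℝ}

lemma continuous_jet (hx : ContDiff ℝ 2 x) (hy : ContDiff ℝ 2 y) : Continuous (jet x y) := by
  obtain ⟨hx₀, hx₁, -⟩ := contDiff_two_iff_deriv.1 hx
  obtain ⟨hy₀, hy₁, -⟩ := contDiff_two_iff_deriv.1 hy
  have := hx₀.continuous; have := hy₀.continuous
  have := hx₁.continuous; have := hy₁.continuous
  unfold jet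
  fun_prop

lemma hasDerivAt_jet (hx : ContDiff ℝ 2 x) (hy : ContDiff ℝ 2 y) (t : ℝ) :
    HasDerivAt (jet x y) (deriv x t, deriv y t, deriv (deriv x) t, deriv (deriv y) t) t := by
  obtain ⟨hx₀, hx₁, -⟩ := contDiff_two_iff_deriv.1 hx
  obtain ⟨hy₀, hy₁, -⟩ := contDiff_two_iff_deriv.1 hy
  exact (hx₀ t).hasDerivAt.prodMk <| (hy₀ t).hasDerivAt.prodMk <|
    (hx₁ t).hasDerivAt.prodMk (hy₁ t).hasDerivAt

lemma hasDerivAt_jet_iff (hx : ContDiff ℝ 2 x) (hy : ContDiff ℝ 2 y) {t : ℝ} :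
    HasDerivAt (jet x y) (geodesicField (jet x y t)) t ↔
      deriv (deriv x) t = (geodesicField (jet x y t)).2.2.1 ∧
        deriv (deriv y) t = (geodesicField (jet x y t)).2.2.2 := by
  refine ⟨fun h => ?_, fun ⟨h1, h2⟩ => ?_⟩
  · have := (hasDerivAt_jet hx hy t).unique h
    exact ⟨congrArg (·.2.2.1) this, congrArg (·.2.2.2) this⟩
  · convert hasDerivAt_jet hx hy t using 1
    rw [h1, h2]
    rfl

lemma hasDerivAt_jet_of_mem_Icc {τ : ℝ} (hτ : 0 < τ) (hx : ContDiff ℝ 2 x)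
    (hy : ContDiff ℝ 2 y) (hsq : ∀ t ∈ Icc 0 τ, jet x y t ∈ squareDomain)
    (hgeo : ∀ t ∈ Ico 0 τ, HasDerivAt (jet x y) (geodesicField (jet x y t)) t) :
    ∀ t ∈ Icc 0 τ, HasDerivAt (jet x y) (geodesicField (jet x y t)) t := by
  obtain ⟨-, hx₁, -⟩ := contDiff_two_iff_deriv.1 hx
  obtain ⟨-, hy₁, -⟩ := contDiff_two_iff_deriv.1 hy
  have hJ : Continuous fun t => (deriv x t, deriv y t, deriv (deriv x) t, deriv (deriv y) t) := by
    have := hx₁.continuous; have := hy₁.continuous; fun_prop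
  have hEq : EqOn (fun t => (deriv x t, deriv y t, deriv (deriv x) t, deriv (deriv y) t))
      (geodesicField ∘ jet x y) (Icc 0 τ) :=
    EqOn.of_subset_closure (fun t ht => (hasDerivAt_jet hx hy t).unique (hgeo t ht))
      hJ.continuousOn
      (contDiffOn_geodesicField.continuousOn.comp (continuous_jet hx hy).continuousOn hsq)
      Ico_subset_Icc_self (by rw [closure_Ico hτ.ne])
  exact fun t ht => (hasDerivAt_jet hx hy t).congr_deriv (hEq ht)

lemma jet_eventuallyEq_of_eventuallyEq {x' y' : ℝ → ℝ} {t : ℝ} (hx : x' =ᶠ[𝓝 t] x)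
    (hy : y' =ᶠ[𝓝 t] y) : jet x' y' =ᶠ[𝓝 t] jet x y := by
  filter_upwards [hx, hy, hx.deriv, hy.deriv] with s h₁ h₂ h₃ h₄
  simp only [jet, h₁, h₂, h₃, h₄]

lemma jet_eventuallyEq_of_hasDerivAt {α : ℝ → ℝ × ℝ × ℝ × ℝ} {t : ℝ}
    (hx : x =ᶠ[𝓝 t] fun s => (α s).1) (hy : y =ᶠ[𝓝 t] fun s => (α s).2.1)
    (hα : ∀ᶠ s in 𝓝 t, HasDerivAt α (geodesicField (α s)) s) :
    jet x y =ᶠ[𝓝 t] α := by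
  filter_upwards [hx, hy, hx.deriv, hy.deriv, hα] with s h₁ h₂ h₃ h₄ hs
  simp only [jet, h₁, h₂, h₃, h₄, hs.prodFst.deriv, hs.prodSnd.prodFst.deriv]
  rfl

end Jet

section IntegralCurve

variable {α : ℝ → ℝ × ℝ × ℝ × ℝ} {I : Set ℝ}

lemma contDiffOn_fst_snd_of_hasDerivAt (hI : IsOpen I)
    (hα : ∀ t ∈ I, HasDerivAt α (geodesicField (α t)) t ∧ α t ∈ squareDomain) :
    ContDiffOn ℝ 2 (fun t => (α t).1) I ∧ ContDiffOn ℝ 2 (fun t => (α t).2.1) I := by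
  have hc : ContinuousOn (fun t => (geodesicField (α t)).2.2) I :=
    continuous_snd.comp_continuousOn <| continuous_snd.comp_continuousOn <|
      contDiffOn_geodesicField.continuousOn.comp
        (HasDerivAt.continuousOn fun t ht => (hα t ht).1) fun t ht => (hα t ht).2
  exact ⟨contDiffOn_two_of_hasDerivAt hI (fun t ht => (hα t ht).1.prodFst)
      (fun t ht => (hα t ht).1.prodSnd.prodSnd.prodFst) (continuous_fst.comp_continuousOn hc),
    contDiffOn_two_of_hasDerivAt hI (fun t ht => (hα t ht).1.prodSnd.prodFst)
      (fun t ht => (hα t ht).1.prodSnd.prodSnd.prodSnd) (continuous_snd.comp_continuousOn hc)⟩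

lemma hasDerivAt_energy_comp {t : ℝ} (hα : HasDerivAt α (geodesicField (α t)) t)
    (hmem : α t ∈ squareDomain) : HasDerivAt (fun s => energy (α s)) 0 t := by
  have h1 := (one_sub_sq_pos_of_abs_lt_one hmem.1).ne'
  have h2 := (one_sub_sq_pos_of_abs_lt_one hmem.2).ne'
  have hx := hα.prodFst
  have hy := hα.prodSnd.prodFst
  have hu := hα.prodSnd.prodSnd.prodFst
  have hw := hα.prodSnd.prodSnd.prodSnd
  refine ((((hy.fun_pow 2).const_sub 1).fun_mul (hu.fun_pow 2)).fun_add
    (((hx.fun_pow 2).const_sub 1).fun_mul (hw.fun_pow 2))).congr_deriv ?_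
  simp only [geodesicField]
  field_simp
  ring

lemma energy_comp_eq (hI : IsOpen I) (hI' : IsPreconnected I)
    (hα : ∀ t ∈ I, HasDerivAt α (geodesicField (α t)) t ∧ α t ∈ squareDomain) {s t : ℝ}
    (hs : s ∈ I) (ht : t ∈ I) : energy (α s) = energy (α t) :=
  hI.is_const_of_deriv_eq_zero hI'
    (fun u hu => (hasDerivAt_energy_comp (hα u hu).1 (hα u hu).2).differentiableAt
      |>.differentiableWithinAt)
    (fun u hu => (hasDerivAt_energy_comp (hα u hu).1 (hα u hu).2).deriv) hs ht

end IntegralCurve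

theorem exists_geodesic_extension {x y : ℝ → ℝ} {τ : ℝ} (hτ : 0 < τ)
    (hx : ContDiff ℝ 2 x) (hy : ContDiff ℝ 2 y)
    (hsq : ∀ t ∈ Icc 0 τ, jet x y t ∈ squareDomain)
    (hgeo : ∀ t ∈ Ico 0 τ, HasDerivAt (jet x y) (geodesicField (jet x y t)) t)
    (hunit : ∀ t ∈ Ico 0 τ, energy (jet x y t) = 1) :
    ∃ b > τ, ∃ x' y' : ℝ → ℝ, ContDiff ℝ 2 x' ∧ ContDiff ℝ 2 y' ∧
      EqOn x' x (Iio τ) ∧ EqOn y' y (Iio τ) ∧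
      ∀ t ∈ Ico 0 b, jet x' y' t ∈ squareDomain ∧
        HasDerivAt (jet x' y') (geodesicField (jet x' y' t)) t ∧ energy (jet x' y' t) = 1 := by
  have hτmem := isOpen_squareDomain.mem_nhds (hsq τ ⟨hτ.le, le_rfl⟩)
  obtain ⟨δ, hδ, hδτ, α, hα, hjα⟩ := exists_hasDerivAt_eqOn_Ioc_of_contDiffAt hτ
    (contDiffOn_geodesicField.contDiffAt hτmem) hτmem (continuous_jet hx hy).continuousOn
    fun t ht => (hasDerivAt_jet_of_mem_Icc hτ hx hy hsq hgeo t (Ioc_subset_Icc_self ht))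
      |>.hasDerivWithinAt
  obtain ⟨hα₁, hα₂⟩ := contDiffOn_fst_snd_of_hasDerivAt isOpen_Ioo hα
  obtain ⟨x', hx', hx'x, hx'α⟩ := exists_contDiff_eqOn_Iio_eqOn_Ioo (n := 2) (c := τ)
    (b' := τ + δ / 2) (by linarith) (by linarith) (by linarith) hx hα₁
    fun t ht => congrArg Prod.fst (hjα ⟨ht.1, ht.2.le⟩)
  obtain ⟨y', hy', hy'y, hy'α⟩ := exists_contDiff_eqOn_Iio_eqOn_Ioo (n := 2) (c := τ)
    (b' := τ + δ / 2) (by linarith) (by linarith) (by linarith) hy hα₂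
    fun t ht => congrArg (·.2.1) (hjα ⟨ht.1, ht.2.le⟩)
  refine ⟨τ + δ / 2, by linarith, x', y', hx', hy', hx'x, hy'y, fun t ht => ?_⟩
  rcases lt_or_ge t τ with htτ | htτ
  · have hj : jet x' y' =ᶠ[𝓝 t] jet x y := jet_eventuallyEq_of_eventuallyEq
      (hx'x.eventuallyEq_of_mem (Iio_mem_nhds htτ)) (hy'y.eventuallyEq_of_mem (Iio_mem_nhds htτ))
    rw [hj.eq_of_nhds]
    exact ⟨hsq t ⟨ht.1, htτ.le⟩, (hgeo t ⟨ht.1, htτ⟩).congr_of_eventuallyEq hj,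
      hunit t ⟨ht.1, htτ⟩⟩
  · have hI : Ioo (τ - δ) (τ + δ / 2) ∈ 𝓝 t := Ioo_mem_nhds (by linarith) ht.2
    have hj : jet x' y' =ᶠ[𝓝 t] α := jet_eventuallyEq_of_hasDerivAt
      (hx'α.eventuallyEq_of_mem hI) (hy'α.eventuallyEq_of_mem hI)
      (eventually_of_mem hI fun s hs => (hα s ⟨hs.1, by linarith [hs.2]⟩).1)
    have htI : t ∈ Ioo (τ - δ) (τ + δ) := ⟨by linarith, by linarith [ht.2]⟩
    rw [hj.eq_of_nhds, energy_comp_eq isOpen_Ioo isPreconnected_Ioo hα htI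
      (t := τ - δ / 2) ⟨by linarith, by linarith⟩,
      ← hjα (show τ - δ / 2 ∈ Ioc (τ - δ) τ from ⟨by linarith, by linarith⟩)]
    exact ⟨(hα t htI).2, (hα t htI).1.congr_of_eventuallyEq hj,
      hunit _ ⟨by linarith, by linarith⟩⟩

section HorizontalStart

variable {x y : ℝ → ℝ} {b : ℝ}

lemma hasDerivAt_momentumY {t : ℝ}
    (h : HasDerivAt (jet x y) (geodesicField (jet x y t)) t) (hx : |x t| < 1) :
    HasDerivAt (momentumY x y) (-y t * deriv x t ^ 2) t := by
  have h1 := (one_sub_sq_pos_of_abs_lt_one hx).ne'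
  refine (((h.prodFst.fun_pow 2).const_sub 1).fun_mul h.prodSnd.prodSnd.prodSnd).congr_deriv ?_
  simp only [geodesicField, jet]
  field_simp
  ring

lemma antitoneOn_momentumY
    (hgeo : ∀ t ∈ Ico 0 b, HasDerivAt (jet x y) (geodesicField (jet x y t)) t)
    (hx : ∀ t ∈ Ico 0 b, |x t| < 1) (hy : ∀ t ∈ Ico 0 b, 0 ≤ y t) :
    AntitoneOn (momentumY x y) (Ico 0 b) := by
  have hq : ∀ t ∈ Ico 0 b, HasDerivAt (momentumY x y) (-y t * deriv x t ^ 2) t :=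
    fun t ht => hasDerivAt_momentumY (hgeo t ht) (hx t ht)
  refine antitoneOn_of_deriv_nonpos (convex_Ico 0 b) (HasDerivAt.continuousOn hq)
    (fun t ht => (hq t (interior_subset ht)).differentiableAt.differentiableWithinAt)
    fun t ht => ?_
  rw [(hq t (interior_subset ht)).deriv, neg_mul]
  exact neg_nonpos.2 (mul_nonneg (hy t (interior_subset ht)) (sq_nonneg _))

lemma momentumY_neg
    (hgeo : ∀ t ∈ Ico 0 b, HasDerivAt (jet x y) (geodesicField (jet x y t)) t)
    (hx : ∀ t ∈ Ico 0 b, |x t| < 1) (hy : ∀ t ∈ Ico 0 b, 0 < y t)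
    (hdy0 : deriv y 0 = 0) (hdx0 : deriv x 0 ≠ 0) :
    ∀ t ∈ Ioo 0 b, momentumY x y t < 0 := by
  intro t ht
  have h0 : (0 : ℝ) ∈ Ico 0 b := ⟨le_rfl, ht.1.trans ht.2⟩
  have hq0 : momentumY x y 0 = 0 := by simp [momentumY, hdy0]
  rw [← hq0]
  refine (antitoneOn_momentumY hgeo hx fun s hs => (hy s hs).le).lt_of_hasDerivWithinAt_neg
    (hasDerivAt_momentumY (hgeo 0 h0) (hx 0 h0)).hasDerivWithinAt ?_ t ht
  have := hy 0 h0
  have : 0 < deriv x 0 ^ 2 := by positivity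
  nlinarith

theorem abs_lt_and_momentumY_neg_of_no_crossing
    (hgeo : ∀ t ∈ Ico 0 b, HasDerivAt (jet x y) (geodesicField (jet x y t)) t)
    (hx : ∀ t ∈ Ico 0 b, |x t| < 1) (hx0 : x 0 = 0) (hy0 : 0 < y 0)
    (hdy0 : deriv y 0 = 0) (hdx0 : deriv x 0 ≠ 0)
    (hno : ∀ t ∈ Ioo 0 b, y t ≠ x t ∧ y t ≠ -x t) :
    (∀ t ∈ Ico 0 b, |x t| < y t) ∧ ∀ t ∈ Ioo 0 b, momentumY x y t < 0 := by
  have hxy := abs_lt_of_forall_ne (x := x) (y := y)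
    (fun t ht => (hgeo t ht).prodFst.continuousAt.continuousWithinAt)
    (fun t ht => (hgeo t ht).prodSnd.prodFst.continuousAt.continuousWithinAt)
    (by rwa [hx0, abs_zero]) hno
  exact ⟨hxy, momentumY_neg hgeo hx (fun t ht => (abs_nonneg _).trans_lt (hxy t ht)) hdy0 hdx0⟩

lemma deriv_neg_of_momentumY_neg {t : ℝ} (hx : |x t| < 1) (hq : momentumY x y t < 0) :
    deriv y t < 0 :=
  neg_of_mul_neg_right hq (one_sub_sq_pos_of_abs_lt_one hx).le

theorem strictAntiOn_Ioc_of_no_crossing (hyc : ContinuousOn y (Ioc 0 b))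
    (hgeo : ∀ t ∈ Ico 0 b, HasDerivAt (jet x y) (geodesicField (jet x y t)) t)
    (hx : ∀ t ∈ Ico 0 b, |x t| < 1) (hx0 : x 0 = 0) (hy0 : 0 < y 0)
    (hdy0 : deriv y 0 = 0) (hdx0 : deriv x 0 ≠ 0)
    (hno : ∀ t ∈ Ioo 0 b, y t ≠ x t ∧ y t ≠ -x t) :
    StrictAntiOn y (Ioc 0 b) := by
  obtain ⟨-, hq⟩ := abs_lt_and_momentumY_neg_of_no_crossing hgeo hx hx0 hy0 hdy0 hdx0 hno
  refine strictAntiOn_of_deriv_neg (convex_Ioc 0 b) hyc fun t ht => ?_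
  rw [interior_Ioc] at ht
  exact deriv_neg_of_momentumY_neg (hx t (Ioo_subset_Ico_self ht)) (hq t ht)

theorem exists_crossing_of_forall_nonneg
    (hgeo : ∀ t, 0 ≤ t → HasDerivAt (jet x y) (geodesicField (jet x y t)) t)
    (hx : ∀ t, 0 ≤ t → |x t| < 1) (hx0 : x 0 = 0) (hy0 : 0 < y 0)
    (hdy0 : deriv y 0 = 0) (hdx0 : deriv x 0 ≠ 0) :
    ∃ t > 0, y t = x t ∨ y t = -x t := by
  by_contra! hno
  have key := fun b : ℝ => abs_lt_and_momentumY_neg_of_no_crossing (b := b)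
    (fun t ht => hgeo t ht.1) (fun t ht => hx t ht.1) hx0 hy0 hdy0 hdx0 (fun t ht => hno t ht.1)
  set c := momentumY x y 1
  have hc : c < 0 := (key 2).2 1 ⟨one_pos, one_lt_two⟩
  -- `ẏ ≤ (1 - x²) ẏ = q ≤ q(1)` because `ẏ < 0` and `q` is antitone
  have hdy : ∀ t ∈ Ioi (1 : ℝ), deriv y t ≤ c := by
    intro t ht
    have ht₀ : t ∈ Ioo 0 (t + 1) := ⟨by linarith [mem_Ioi.1 ht], by linarith⟩
    have hq := (key (t + 1)).2 t ht₀
    have hqc : momentumY x y t ≤ c :=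
      antitoneOn_momentumY (b := t + 1) (fun s hs => hgeo s hs.1) (fun s hs => hx s hs.1)
        (fun s hs => (abs_nonneg _).trans ((key (t + 1)).1 s hs).le)
        ⟨zero_le_one, by linarith [mem_Ioi.1 ht]⟩ (Ioo_subset_Ico_self ht₀) (mem_Ioi.1 ht).le
    have hdyt := deriv_neg_of_momentumY_neg (hx t ht₀.1.le) hq
    simp only [momentumY] at hqc
    nlinarith [sq_nonneg (x t)]
  have hy1 : 0 < y 1 := (abs_nonneg _).trans_lt ((key 2).1 1 ⟨zero_le_one, one_lt_two⟩)
  set M := 1 + (y 1 + 1) / -c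
  have hM : 1 ≤ M := le_add_of_nonneg_right (div_nonneg (by linarith) (by linarith))
  have hyM : y M - y 1 ≤ c * (M - 1) :=
    (convex_Ici 1).image_sub_le_mul_sub_of_deriv_le
      (fun t ht => (hgeo t (zero_le_one.trans ht)).prodSnd.prodFst.continuousAt.continuousWithinAt)
      (fun t ht => (hgeo t (zero_le_one.trans (interior_subset ht))).prodSnd.prodFst
        |>.differentiableAt.differentiableWithinAt)
      (by rwa [interior_Ici]) 1 self_mem_Ici M hM hM
  have hcM : c * (M - 1) = -(y 1 + 1) := by
    simp only [M, add_sub_cancel_left]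
    field_simp [hc.ne]
  have hMpos := (abs_nonneg _).trans_lt ((key (M + 1)).1 M ⟨by linarith, by linarith⟩)
  linarith

lemma jet_mem_squareDomain_of_no_crossing {τ : ℝ} (hτ : 0 < τ)
    (hxc : Continuous x) (hyc : Continuous y)
    (hgeo : ∀ t ∈ Ico 0 τ, HasDerivAt (jet x y) (geodesicField (jet x y t)) t)
    (hsq : ∀ t ∈ Ico 0 τ, jet x y t ∈ squareDomain) (hx0 : x 0 = 0) (hy0 : 0 < y 0)
    (hy0' : y 0 < 1) (hdy0 : deriv y 0 = 0) (hdx0 : deriv x 0 ≠ 0)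
    (hno : ∀ t ∈ Ioo 0 τ, y t ≠ x t ∧ y t ≠ -x t) :
    ∀ t ∈ Icc 0 τ, jet x y t ∈ squareDomain := by
  obtain ⟨hxy, hq⟩ := abs_lt_and_momentumY_neg_of_no_crossing hgeo (fun t ht => (hsq t ht).1)
    hx0 hy0 hdy0 hdx0 hno
  have hanti : AntitoneOn y (Ico 0 τ) :=
    antitoneOn_of_deriv_nonpos (convex_Ico 0 τ) hyc.continuousOn
      (fun t ht => (hgeo t (interior_subset ht)).prodSnd.prodFst.differentiableAt
        |>.differentiableWithinAt)
      fun t ht => by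
        rw [interior_Ico] at ht
        exact (deriv_neg_of_momentumY_neg (hsq t (Ioo_subset_Ico_self ht)).1 (hq t ht)).le
  have hyle : ∀ t ∈ Ico 0 τ, y t ≤ y 0 := fun t ht => hanti ⟨le_rfl, hτ⟩ ht ht.1
  have hτcl : τ ∈ closure (Ico 0 τ) := by rw [closure_Ico hτ.ne]; exact right_mem_Icc.2 hτ.le
  have hbound : ∀ f : ℝ → ℝ, Continuous f → (∀ t ∈ Ico 0 τ, f t ≤ y 0) → f τ < 1 :=
    fun f hf h => (ContinuousWithinAt.closure_le hτcl hf.continuousWithinAt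
      continuousWithinAt_const h).trans_lt hy0'
  intro t ht
  rcases ht.2.lt_or_eq with htτ | rfl
  · exact hsq t ⟨ht.1, htτ⟩
  · refine ⟨hbound _ hxc.abs fun s hs => (hxy s hs).le.trans (hyle s hs),
      hbound _ hyc.abs fun s hs => ?_⟩
    rw [abs_of_pos ((abs_nonneg _).trans_lt (hxy s hs))]
    exact hyle s hs

end HorizontalStart

/-- A unit-speed geodesic of the metric `ds² = (1−y²)dx² + (1−x²)dy²` on the open square,
defined on its maximal interval `[0,T)` and meeting the `y`-axis horizontally at time `0`
(with `x(0) = 0`, `0 < y(0) < 1`, `ẏ(0) = 0`, `ẋ(0) > 0`), must meet one of the lines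
`y = ±x`; moreover `y` is strictly decreasing on `(0, t*]` where `t*` is the first
meeting time. -/
theorem geodesic_in_H_meets_diagonal
    (x y : ℝ → ℝ) (T : EReal) (hT : 0 < T)
    (hx : ContDiff ℝ 2 x) (hy : ContDiff ℝ 2 y)
    (hsq : ∀ t : ℝ, 0 ≤ t → (t : EReal) < T → |x t| < 1 ∧ |y t| < 1)
    (hgeo₁ : ∀ t : ℝ, 0 ≤ t → (t : EReal) < T →
      deriv (deriv x) t =
        2 * y t / (1 - (y t) ^ 2) * deriv x t * deriv y t
          - x t / (1 - (y t) ^ 2) * (deriv y t) ^ 2)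
    (hgeo₂ : ∀ t : ℝ, 0 ≤ t → (t : EReal) < T →
      deriv (deriv y) t =
        -(y t) / (1 - (x t) ^ 2) * (deriv x t) ^ 2
          + 2 * x t / (1 - (x t) ^ 2) * deriv x t * deriv y t)
    (hunit : ∀ t : ℝ, 0 ≤ t → (t : EReal) < T →
      (1 - (y t) ^ 2) * (deriv x t) ^ 2 + (1 - (x t) ^ 2) * (deriv y t) ^ 2 = 1)
    (hx0 : x 0 = 0) (hy0 : 0 < y 0) (hy0' : y 0 < 1)
    (hdy0 : deriv y 0 = 0) (hdx0 : 0 < deriv x 0)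
    (hmax : ¬ ∃ (T' : EReal) (x' y' : ℝ → ℝ), T < T' ∧
      ContDiff ℝ 2 x' ∧ ContDiff ℝ 2 y' ∧
      (∀ t : ℝ, 0 ≤ t → (t : EReal) < T → x' t = x t ∧ y' t = y t) ∧
      (∀ t : ℝ, 0 ≤ t → (t : EReal) < T' →
        (|x' t| < 1 ∧ |y' t| < 1) ∧
        deriv (deriv x') t =
          2 * y' t / (1 - (y' t) ^ 2) * deriv x' t * deriv y' t
            - x' t / (1 - (y' t) ^ 2) * (deriv y' t) ^ 2 ∧
        deriv (deriv y') t =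
          -(y' t) / (1 - (x' t) ^ 2) * (deriv x' t) ^ 2
            + 2 * x' t / (1 - (x' t) ^ 2) * deriv x' t * deriv y' t ∧
        (1 - (y' t) ^ 2) * (deriv x' t) ^ 2 + (1 - (x' t) ^ 2) * (deriv y' t) ^ 2 = 1)) :
    (∃ t : ℝ, 0 < t ∧ (t : EReal) < T ∧ (y t = x t ∨ y t = -x t)) ∧
    ∀ tstar : ℝ,
      IsLeast {t : ℝ | 0 < t ∧ (t : EReal) < T ∧ (y t = x t ∨ y t = -x t)} tstar →
      StrictAntiOn y (Set.Ioc 0 tstar) := by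
  have hOn : ∀ b : ℝ, (b : EReal) ≤ T → ∀ t ∈ Ico 0 b,
      HasDerivAt (jet x y) (geodesicField (jet x y t)) t ∧ jet x y t ∈ squareDomain ∧
        energy (jet x y t) = 1 := fun b hb t ht =>
    have htT := (EReal.coe_lt_coe_iff.2 ht.2).trans_le hb
    ⟨(hasDerivAt_jet_iff hx hy).2 ⟨hgeo₁ t ht.1 htT, hgeo₂ t ht.1 htT⟩, hsq t ht.1 htT,
      hunit t ht.1 htT⟩
  refine ⟨?_, fun tstar ⟨⟨_, hlt, _⟩, hleast⟩ => ?_⟩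
  · by_contra! hno
    induction T using EReal.rec with
    | bot => exact not_lt_bot hT
    | top =>
      obtain ⟨t, ht, hcross⟩ := exists_crossing_of_forall_nonneg
        (fun t h0 => (hOn (t + 1) le_top t ⟨h0, lt_add_one t⟩).1)
        (fun t h0 => (hOn (t + 1) le_top t ⟨h0, lt_add_one t⟩).2.1.1) hx0 hy0 hdy0 hdx0.ne'
      exact not_or.2 (hno t ht (EReal.coe_lt_top t)) hcross
    | coe τ =>
      have hτ : 0 < τ := EReal.coe_pos.1 hT
      obtain ⟨b, hb, x', y', hx', hy', hx'x, hy'y, hext⟩ := exists_geodesic_extension hτ hx hy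
        (jet_mem_squareDomain_of_no_crossing hτ (continuous_jet hx hy).fst
          (continuous_jet hx hy).snd.fst (fun t ht => (hOn τ le_rfl t ht).1)
          (fun t ht => (hOn τ le_rfl t ht).2.1) hx0 hy0 hy0' hdy0 hdx0.ne'
          fun t ht => hno t ht.1 (EReal.coe_lt_coe_iff.2 ht.2))
        (fun t ht => (hOn τ le_rfl t ht).1) (fun t ht => (hOn τ le_rfl t ht).2.2)
      refine hmax ⟨b, x', y', EReal.coe_lt_coe_iff.2 hb, hx', hy',
        fun t _ ht => ⟨hx'x (EReal.coe_lt_coe_iff.1 ht), hy'y (EReal.coe_lt_coe_iff.1 ht)⟩,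
        fun t h0 ht => ?_⟩
      obtain ⟨hmem, hjet, henergy⟩ := hext t ⟨h0, EReal.coe_lt_coe_iff.1 ht⟩
      obtain ⟨hgeo₁', hgeo₂'⟩ := (hasDerivAt_jet_iff hx' hy').1 hjet
      exact ⟨hmem, hgeo₁', hgeo₂', henergy⟩
  · have hOn' := hOn tstar hlt.le
    exact strictAntiOn_Ioc_of_no_crossing (continuous_jet hx hy).snd.fst.continuousOn
      (fun t ht => (hOn' t ht).1) (fun t ht => (hOn' t ht).2.1.1) hx0 hy0 hdy0 hdx0.ne'
      fun t ht => not_or.1 fun h =>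
        (hleast ⟨ht.1, (EReal.coe_lt_coe_iff.2 ht.2).trans hlt, h⟩).not_gt ht.2
end

section
/- Let y = y(x) be a solution of the implicit geodesic equation at a point where 0 < x < 1 and 0 < y(x) < 1. If dy/dx ≤ 0 at that point, then d²y/dx² < 0 there. (Thus in the open first quadrant of the square, a solution with nonpositive slope is strictly concave.) -/
/-- For a solution `y = y(x)` of the implicit geodesic equation of the metric
`ds² = (1−y²)dx² + (1−x²)dy²`, at a point of the open first quadrant of the square
(`0 < x < 1`, `0 < y < 1`) where `dy/dx ≤ 0`, one has `d²y/dx² < 0`. -/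
theorem geodesic_concave_in_first_quadrant
    (y : ℝ → ℝ) (x₀ : ℝ) (hx₀ : 0 < x₀) (hx₁ : x₀ < 1)
    (hy₀ : 0 < y x₀) (hy₁ : y x₀ < 1)
    (heq : deriv (deriv y) x₀ =
      x₀ / (1 - (y x₀) ^ 2) * (deriv y x₀) ^ 3
        - 2 * y x₀ / (1 - (y x₀) ^ 2) * (deriv y x₀) ^ 2
        + 2 * x₀ / (1 - x₀ ^ 2) * deriv y x₀
        - y x₀ / (1 - x₀ ^ 2))
    (hslope : deriv y x₀ ≤ 0) :
    deriv (deriv y) x₀ < 0 := by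
  rw [heq]
  set p := deriv y x₀
  set Y := y x₀
  have hY2 : (0:ℝ) < 1 - Y ^ 2 := by nlinarith
  have hX2 : (0:ℝ) < 1 - x₀ ^ 2 := by nlinarith
  have t1 : x₀ / (1 - Y ^ 2) * p ^ 3 ≤ 0 := by
    apply mul_nonpos_of_nonneg_of_nonpos (by positivity)
    nlinarith [sq_nonneg p]
  have t2 : 2 * Y / (1 - Y ^ 2) * p ^ 2 ≥ 0 := by positivity
  have t3 : 2 * x₀ / (1 - x₀ ^ 2) * p ≤ 0 :=
    mul_nonpos_of_nonneg_of_nonpos (by positivity) hslope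
  have t4 : Y / (1 - x₀ ^ 2) > 0 := by positivity
  linarith
end

section
/- Define L(a) = (3/4 − 2a)·(2√(2a(1−a)) + √(3/8)) for a ∈ [0,1/4]. Then (L(a) − L(0))/a → +∞ as a → 0⁺; in particular there exists ε > 0 such that L(a) > L(0) for all a ∈ (0,ε). -/
/-!
Since `L(a) - L(0) = 2(3/4 - 2a)√(2a(1-a)) - 2a√(3/8)` and, for `a < 1/8`, both `2(3/4 - 2a)` and
`2(1 - a)` are at least `1`, the difference quotient is bounded below by `a^{-1/2} - 2√(3/8)`,
which tends to `+∞`.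
-/

open Set Filter Topology

theorem tendsto_inv_sqrt_nhdsGT_zero :
    Tendsto (fun a : ℝ => (Real.sqrt a)⁻¹) (𝓝[>] 0) atTop := by
  refine tendsto_inv_nhdsGT_zero.comp (tendsto_nhdsWithin_iff.2 ⟨?_, ?_⟩)
  · exact (Real.continuous_sqrt.tendsto' 0 0 Real.sqrt_zero).mono_left nhdsWithin_le_nhds
  · filter_upwards [self_mem_nhdsWithin] with a ha using Real.sqrt_pos.2 ha

theorem exists_forall_Ioo_lt_of_tendsto_div_atTop {f : ℝ → ℝ}
    (h : Tendsto (fun a => (f a - f 0) / a) (𝓝[>] 0) atTop) :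
    ∃ ε > 0, ∀ a ∈ Ioo 0 ε, f 0 < f a := by
  obtain ⟨ε, hε, hsub⟩ := mem_nhdsGT_iff_exists_Ioo_subset.1 (h.eventually_gt_atTop 0)
  exact ⟨ε, hε, fun a ha => sub_pos.1 ((div_pos_iff_of_pos_right ha.1).1 (hsub ha))⟩

namespace Sweepout

noncomputable def L (a : ℝ) : ℝ :=
  (3 / 4 - 2 * a) * (2 * Real.sqrt (2 * a * (1 - a)) + Real.sqrt (3 / 8))

theorem L_sub_L_zero (a : ℝ) :
    L a - L 0 =
      2 * (3 / 4 - 2 * a) * Real.sqrt (2 * a * (1 - a)) - 2 * a * Real.sqrt (3 / 8) := by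
  simp only [L, mul_zero, zero_mul, Real.sqrt_zero]
  ring

theorem inv_sqrt_sub_le_slope {a : ℝ} (ha₀ : 0 < a) (ha : a < 1 / 8) :
    (Real.sqrt a)⁻¹ - 2 * Real.sqrt (3 / 8) ≤ (L a - L 0) / a := by
  have hroot : Real.sqrt a ≤ Real.sqrt (2 * a * (1 - a)) := Real.sqrt_le_sqrt (by nlinarith)
  have hroot_nonneg := Real.sqrt_nonneg (2 * a * (1 - a))
  rw [L_sub_L_zero, le_div_iff₀ ha₀, sub_mul, ← Real.sqrt_div_self, div_mul_cancel₀ _ ha₀.ne']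
  nlinarith

end Sweepout

/-- For `L(a) = (3/4 − 2a)(2√(2a(1−a)) + √(3/8))`, the difference quotient
`(L(a) − L(0))/a` tends to `+∞` as `a → 0⁺`; in particular `L(a) > L(0)` for all
sufficiently small `a > 0`. -/
theorem sweepout_length_increases_near_zero :
    Filter.Tendsto
      (fun a : ℝ =>
        (((3 / 4 - 2 * a) * (2 * Real.sqrt (2 * a * (1 - a)) + Real.sqrt (3 / 8)))
          - ((3 / 4 - 2 * 0) * (2 * Real.sqrt (2 * 0 * (1 - 0)) + Real.sqrt (3 / 8)))) / a)
      (nhdsWithin 0 (Set.Ioi 0)) Filter.atTop ∧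
    ∃ ε > (0 : ℝ), ∀ a ∈ Set.Ioo (0 : ℝ) ε,
      (3 / 4 - 2 * 0) * (2 * Real.sqrt (2 * 0 * (1 - 0)) + Real.sqrt (3 / 8)) <
        (3 / 4 - 2 * a) * (2 * Real.sqrt (2 * a * (1 - a)) + Real.sqrt (3 / 8)) := by
  have hslope : Tendsto (fun a => (Sweepout.L a - Sweepout.L 0) / a) (𝓝[>] 0) atTop := by
    refine tendsto_atTop_mono' _ ?_
      (tendsto_atTop_add_const_right _ (-(2 * Real.sqrt (3 / 8)))
        tendsto_inv_sqrt_nhdsGT_zero)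
    filter_upwards [Ioo_mem_nhdsGT (by norm_num : (0 : ℝ) < 1 / 8)] with a ha
    exact Sweepout.inv_sqrt_sub_le_slope ha.1 ha.2
  exact ⟨hslope, exists_forall_Ioo_lt_of_tendsto_div_atTop hslope⟩
end

section
/- For every c with 0 < c < 1, the function u ↦ 1/√((u²−c²)(1−u²)) is integrable on the interval (c,1), and 4c·∫_c^1 du/√((u²−c²)(1−u²)) < 4π·√(c/(2(1+c))). Moreover this quantity equals 4·∫_{arcsin c}^{π/2} c/√(sin²x − c²) dx (the period Ω_c of oscillation about y = π/2 of the geodesic of the metric ds² = sin²y·(dx² + dy²) along which the minimum value of sin y equals c). -/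
open Set MeasureTheory Real

section
variable {c : ℝ}

lemma image_sin_aux (hc0 : 0 < c) (hc1 : c < 1) :
    Real.sin '' Ioo (Real.arcsin c) (π/2) = Ioo c 1 := by
  ext u
  simp only [mem_image, mem_Ioo]
  constructor
  · rintro ⟨x, ⟨hx1, hx2⟩, rfl⟩
    have ha : -(π/2) ≤ arcsin c := neg_pi_div_two_le_arcsin c
    have hx : x ∈ Icc (-(π/2)) (π/2) := ⟨le_trans ha hx1.le, hx2.le⟩
    have hpi : (0:ℝ) < π := pi_pos
    refine ⟨?_, ?_⟩
    · have := strictMonoOn_sin ⟨ha, arcsin_le_pi_div_two c⟩ hx hx1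
      rwa [Real.sin_arcsin (by linarith) (by linarith)] at this
    · have := strictMonoOn_sin hx ⟨by linarith, le_refl _⟩ hx2
      rwa [Real.sin_pi_div_two] at this
  · rintro ⟨h1, h2⟩
    refine ⟨Real.arcsin u, ⟨?_, ?_⟩, Real.sin_arcsin (by linarith) (by linarith)⟩
    · exact strictMonoOn_arcsin ⟨by linarith, by linarith⟩ ⟨by linarith, by linarith⟩ h1
    · exact Real.arcsin_lt_pi_div_two.2 h2


lemma image_phi_aux (hc0 : 0 < c) (hc1 : c < 1) :
    (fun θ => (1+c)/2 + (1-c)/2 * Real.sin θ) '' Ioo (-(π/2)) (π/2) = Ioo c 1 := by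
  have hpi : (0:ℝ) < π := pi_pos
  ext u
  simp only [mem_image, mem_Ioo]
  constructor
  · rintro ⟨θ, ⟨hθ1, hθ2⟩, rfl⟩
    have hIcc : θ ∈ Icc (-(π/2)) (π/2) := ⟨hθ1.le, hθ2.le⟩
    have hlt : Real.sin θ < 1 := by
      have := strictMonoOn_sin hIcc ⟨by linarith, le_refl _⟩ hθ2
      rwa [Real.sin_pi_div_two] at this
    have hgt : -1 < Real.sin θ := by
      have := strictMonoOn_sin ⟨le_refl _, by linarith⟩ hIcc hθ1
      rwa [Real.sin_neg, Real.sin_pi_div_two] at this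
    constructor <;> nlinarith
  · rintro ⟨h1, h2⟩
    have h1c : (0:ℝ) < 1 - c := by linarith
    set y := (2*u - 1 - c)/(1-c) with hy
    have hy1 : y < 1 := (div_lt_one h1c).2 (by linarith)
    have hy2 : -1 < y := (lt_div_iff₀ h1c).2 (by linarith)
    refine ⟨Real.arcsin y, ⟨neg_pi_div_two_lt_arcsin.2 hy2, Real.arcsin_lt_pi_div_two.2 hy1⟩, ?_⟩
    rw [Real.sin_arcsin (by linarith) (by linarith), hy]
    field_simp
    ring

lemma injOn_phi_aux (hc1 : c < 1) :
    InjOn (fun θ => (1+c)/2 + (1-c)/2 * Real.sin θ) (Ioo (-(π/2)) (π/2)) := by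
  intro a ha b hb h
  simp only at h
  have h2 : Real.sin a = Real.sin b := by
    have hne : (1-c)/2 ≠ 0 := by
      have : (0:ℝ) < (1-c)/2 := by linarith
      exact ne_of_gt this
    have := add_left_cancel h
    exact mul_left_cancel₀ hne this
  exact injOn_sin ⟨ha.1.le, ha.2.le⟩ ⟨hb.1.le, hb.2.le⟩ h2


lemma h_facts (hc0 : 0 < c) (hc1 : c < 1)
    (himg : (fun θ => (1+c)/2 + (1-c)/2 * Real.sin θ) '' Ioo (-(π/2)) (π/2) = Ioo c 1)
    (hinj : InjOn (fun θ => (1+c)/2 + (1-c)/2 * Real.sin θ) (Ioo (-(π/2)) (π/2))) :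
    IntegrableOn (fun u => 1 / Real.sqrt ((u - c) * (1 - u))) (Ioo c 1) volume ∧
    ∫ u in Ioo c 1, 1 / Real.sqrt ((u - c) * (1 - u)) = π := by
  set φ : ℝ → ℝ := fun θ => (1+c)/2 + (1-c)/2 * Real.sin θ with hφ
  set s2 : Set ℝ := Ioo (-(π/2)) (π/2) with hs2
  have ms : MeasurableSet s2 := measurableSet_Ioo
  have hderiv : ∀ θ ∈ s2, HasDerivWithinAt φ ((1-c)/2 * Real.cos θ) s2 θ := fun θ _ =>
    (((Real.hasDerivAt_sin θ).const_mul ((1-c)/2)).const_add ((1+c)/2)).hasDerivWithinAt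
  set h : ℝ → ℝ := fun u => 1 / Real.sqrt ((u - c) * (1 - u)) with hh
  have hpt : ∀ θ ∈ s2, |(1-c)/2 * Real.cos θ| • h (φ θ) = 1 := by
    intro θ hθ
    have hcos : 0 < Real.cos θ := Real.cos_pos_of_mem_Ioo hθ
    have hB : 0 < (1-c)/2 * Real.cos θ := by
      have : (0:ℝ) < (1-c)/2 := by linarith
      positivity
    have hsq : (φ θ - c) * (1 - φ θ) = ((1-c)/2 * Real.cos θ)^2 := by
      simp only [hφ]
      linear_combination (-(((1-c)/2)^2)) * (Real.sin_sq_add_cos_sq θ)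
    have h1c : (0:ℝ) < 1 - c := by linarith
    simp only [hh, hsq, Real.sqrt_sq hB.le, smul_eq_mul, abs_of_pos hB]
    field_simp
  have key := integral_image_eq_integral_abs_deriv_smul ms hderiv hinj h
  have keyInt := integrableOn_image_iff_integrableOn_abs_deriv_smul ms hderiv hinj h
  rw [himg] at key keyInt
  constructor
  · refine keyInt.2 ?_
    have h1 : IntegrableOn (fun _ : ℝ => (1:ℝ)) s2 volume :=
      integrableOn_const measure_Ioo_lt_top.ne
    refine h1.congr_fun ?_ ms
    intro θ hθ; exact (hpt θ hθ).symm
  · rw [key, setIntegral_congr_fun ms hpt]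
    simp only [hs2]
    rw [setIntegral_const, measureReal_def, Real.volume_Ioo, smul_eq_mul, mul_one,
      ENNReal.toReal_ofReal (by linarith [pi_pos])]
    ring

end

/-- For `0 < c < 1`, the function `u ↦ 1/√((u²−c²)(1−u²))` is integrable on `(c,1)`,
the period `Ω_c = 4c∫_c^1 du/√((u²−c²)(1−u²))` satisfies `Ω_c < 4π√(c/(2(1+c)))`, and
`Ω_c = 4∫_{arcsin c}^{π/2} c/√(sin²x − c²) dx`, the x-period of oscillation about
`y = π/2` of a geodesic of the metric `ds² = sin²y (dx² + dy²)`. -/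
theorem period_bound_strip_metric (c : ℝ) (hc0 : 0 < c) (hc1 : c < 1) :
    MeasureTheory.IntegrableOn
      (fun u => 1 / Real.sqrt ((u ^ 2 - c ^ 2) * (1 - u ^ 2))) (Set.Ioo c 1) volume ∧
    4 * c * ∫ u in c..1, 1 / Real.sqrt ((u ^ 2 - c ^ 2) * (1 - u ^ 2)) <
      4 * Real.pi * Real.sqrt (c / (2 * (1 + c))) ∧
    4 * c * ∫ u in c..1, 1 / Real.sqrt ((u ^ 2 - c ^ 2) * (1 - u ^ 2)) =
      4 * ∫ x in Real.arcsin c..(Real.pi / 2),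
        c / Real.sqrt (Real.sin x ^ 2 - c ^ 2) := by
  have h1c : (0:ℝ) < 1 - c := by linarith
  obtain ⟨hHint, hHval⟩ := h_facts hc0 hc1 (image_phi_aux hc0 hc1) (injOn_phi_aux hc1)
  set f : ℝ → ℝ := fun u => 1 / Real.sqrt ((u ^ 2 - c ^ 2) * (1 - u ^ 2)) with hf
  set h : ℝ → ℝ := fun u => 1 / Real.sqrt ((u - c) * (1 - u)) with hh
  set K : ℝ := 1 / Real.sqrt (2 * c * (1 + c)) with hK
  have hD : (0:ℝ) < 2 * c * (1 + c) := by positivity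
  -- pointwise strict bound
  have hbound : ∀ u ∈ Ioo c 1, f u < K * h u := by
    rintro u ⟨hu1, hu2⟩
    have hP : 0 < (u - c) * (1 - u) := mul_pos (by linarith) (by linarith)
    have hfac : (u ^ 2 - c ^ 2) * (1 - u ^ 2) = ((u - c) * (1 - u)) * ((u + c) * (1 + u)) := by
      ring
    have hQ : 2 * c * (1 + c) < (u + c) * (1 + u) := by nlinarith
    have hlt : 2 * c * (1 + c) * ((u - c) * (1 - u)) < (u ^ 2 - c ^ 2) * (1 - u ^ 2) := by
      rw [hfac, mul_comm ((u - c) * (1 - u))]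
      exact mul_lt_mul_of_pos_right hQ hP
    have hKh : K * h u = 1 / Real.sqrt (2 * c * (1 + c) * ((u - c) * (1 - u))) := by
      rw [Real.sqrt_mul hD.le]
      simp only [hK, hh, one_div, mul_inv]
    rw [hKh]
    simp only [hf]
    apply one_div_lt_one_div_of_lt
    · exact Real.sqrt_pos.2 (by positivity)
    · exact Real.sqrt_lt_sqrt (by positivity) hlt
  have hfm : Measurable f := by
    apply Measurable.div measurable_const
    exact (measurable_id.pow_const 2 |>.sub measurable_const |>.mul
      (measurable_const.sub (measurable_id.pow_const 2))).sqrt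
  have hfnonneg : ∀ u, 0 ≤ f u := fun u => by simp only [hf]; positivity
  have hFint : IntegrableOn f (Ioo c 1) volume := by
    apply Integrable.mono' (hHint.const_mul K) hfm.aestronglyMeasurable
    filter_upwards [ae_restrict_mem measurableSet_Ioo] with u hu
    rw [Real.norm_eq_abs, abs_of_nonneg (hfnonneg u)]
    exact (hbound u hu).le
  have hKHint : IntegrableOn (fun u => K * h u) (Ioo c 1) volume := hHint.const_mul K
  -- strict inequality of integrals
  set g : ℝ → ℝ := fun u => K * h u - f u with hg
  have hgint : IntegrableOn g (Ioo c 1) volume := hKHint.sub hFint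
  have hnonneg : 0 ≤ᵐ[volume.restrict (Ioo c 1)] g := by
    filter_upwards [ae_restrict_mem measurableSet_Ioo] with u hu
    simp only [hg, Pi.zero_apply]
    linarith [hbound u hu]
  have hposint : 0 < ∫ u in Ioo c 1, g u := by
    rw [setIntegral_pos_iff_support_of_nonneg_ae hnonneg hgint]
    refine lt_of_lt_of_le ?_ (measure_mono (fun u hu => ⟨?_, hu⟩))
    · rw [Real.volume_Ioo]
      exact ENNReal.ofReal_pos.2 (by linarith)
    · simp only [hg, Function.mem_support]
      exact ne_of_gt (by linarith [hbound u hu])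
  have hsplit : ∫ u in Ioo c 1, g u =
      (∫ u in Ioo c 1, K * h u) - ∫ u in Ioo c 1, f u := by
    simp only [hg]
    exact integral_sub hKHint hFint
  have hKhpi : (∫ u in Ioo c 1, K * h u) = K * π := by
    rw [integral_const_mul, hHval]
  have hIlt : ∫ u in Ioo c 1, f u < K * π := by
    rw [hsplit, hKhpi] at hposint
    linarith
  -- sin substitution
  set s1 : Set ℝ := Ioo (Real.arcsin c) (π / 2) with hs1
  have himg1 := image_sin_aux hc0 hc1
  have hinj1 : InjOn Real.sin s1 := by
    apply injOn_sin.mono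
    intro x hx
    exact ⟨le_trans (neg_pi_div_two_le_arcsin c) hx.1.le, hx.2.le⟩
  have hderiv1 : ∀ x ∈ s1, HasDerivWithinAt Real.sin (Real.cos x) s1 x := fun x _ =>
    (Real.hasDerivAt_sin x).hasDerivWithinAt
  have key1 := integral_image_eq_integral_abs_deriv_smul measurableSet_Ioo hderiv1 hinj1 f
  rw [himg1] at key1
  have hpt1 : ∀ x ∈ s1, |Real.cos x| • f (Real.sin x) =
      1 / Real.sqrt (Real.sin x ^ 2 - c ^ 2) := by
    intro x hx
    have harc : 0 ≤ Real.arcsin c := Real.arcsin_nonneg.2 hc0.le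
    have hxIoo : x ∈ Ioo (-(π / 2)) (π / 2) :=
      ⟨by have := pi_pos; linarith [hx.1], hx.2⟩
    have hcos : 0 < Real.cos x := Real.cos_pos_of_mem_Ioo hxIoo
    have hsx : Real.sin x ∈ Ioo c 1 := himg1 ▸ mem_image_of_mem _ hx
    have hA : 0 < Real.sin x ^ 2 - c ^ 2 := by nlinarith [hsx.1, hsx.2]
    have hsqA : 0 < Real.sqrt (Real.sin x ^ 2 - c ^ 2) := Real.sqrt_pos.2 hA
    simp only [hf, smul_eq_mul, abs_of_pos hcos]
    rw [show 1 - Real.sin x ^ 2 = Real.cos x ^ 2 from (Real.cos_sq' x).symm,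
      Real.sqrt_mul hA.le, Real.sqrt_sq hcos.le]
    field_simp
  have key1' : ∫ u in Ioo c 1, f u = ∫ x in s1, 1 / Real.sqrt (Real.sin x ^ 2 - c ^ 2) :=
    key1.trans (setIntegral_congr_fun measurableSet_Ioo hpt1)
  -- interval ↔ set integral conversions
  have e1 : (∫ u in c..1, f u) = ∫ u in Ioo c 1, f u := by
    rw [intervalIntegral.integral_of_le hc1.le, integral_Ioc_eq_integral_Ioo]
  have e2 : (∫ x in Real.arcsin c..(π / 2), c / Real.sqrt (Real.sin x ^ 2 - c ^ 2)) =
      ∫ x in s1, c / Real.sqrt (Real.sin x ^ 2 - c ^ 2) := by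
    rw [intervalIntegral.integral_of_le (Real.arcsin_le_pi_div_two c),
      integral_Ioc_eq_integral_Ioo]
  have e3 : (∫ x in s1, c / Real.sqrt (Real.sin x ^ 2 - c ^ 2)) =
      c * ∫ x in s1, 1 / Real.sqrt (Real.sin x ^ 2 - c ^ 2) := by
    rw [← integral_const_mul]
    exact setIntegral_congr_fun measurableSet_Ioo (fun x _ => by rw [mul_one_div])
  have hsqrt : Real.sqrt (c / (2 * (1 + c))) = c * K := by
    rw [show c / (2 * (1 + c)) = c ^ 2 / (2 * c * (1 + c)) by field_simp]
    rw [Real.sqrt_div (by positivity), Real.sqrt_sq hc0.le, hK, mul_one_div]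
  refine ⟨hFint, ?_, ?_⟩
  · rw [e1]
    calc 4 * c * ∫ u in Ioo c 1, f u < 4 * c * (K * π) := by
          have h4c : (0:ℝ) < 4 * c := by linarith
          exact (mul_lt_mul_iff_right₀ h4c).2 hIlt
      _ = 4 * π * Real.sqrt (c / (2 * (1 + c))) := by rw [hsqrt]; ring
  · rw [e1, e2, e3, key1']
    ring
end

section
/- Let R be real and let t ↦ (x(t),y(t)) be a C² curve with y(t) ∈ (0,π) and x(t) ∈ (R, R + π/2) satisfying the cap geodesic equation ẍ = ẋ²·tan(x−R) − 2ẋẏ·cot y − ẏ²·sin(2(x−R)). If at some time t₀ one has ẋ(t₀) = 0 and ẏ(t₀) ≠ 0, then ẍ(t₀) = −ẏ(t₀)²·sin(2(x(t₀)−R)) < 0. Consequently no geodesic contained in the region x ∈ (R, R+π/2) can be vertical at two distinct times with ẋ > 0 in between; in particular no geodesic loop is contained in the cap. -/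
open Set Real Filter Topology

/-! At a vertical moment the cap geodesic equation reduces to `ẍ = -ẏ² sin 2(x - R)`, which is
negative because `0 < x - R < π/2`. Hence `ẋ` turns negative right after every vertical time, and
a periodic geodesic cannot exist: at the minimum of `x` it is vertical, yet a minimum forces
`ẍ ≥ 0`. -/

theorem Function.Periodic.exists_forall_le {α : Type*} [LinearOrder α] [TopologicalSpace α]
    [ClosedIicTopology α] {f : ℝ → α} {c : ℝ} (hp : Function.Periodic f c) (hc : c ≠ 0)
    (hf : Continuous f) : ∃ a, ∀ t, f a ≤ f t := by
  obtain ⟨_, ⟨a, rfl⟩, ha⟩ :=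
    (hp.compact_of_continuous hc hf).exists_isLeast (range_nonempty f)
  exact ⟨a, fun t ↦ ha ⟨t, rfl⟩⟩

/-- If `f'' < 0`, the second-derivative test also makes `a` a local maximum, so `f` is locally
constant and `f'' = 0`. -/
theorem IsLocalMin.deriv_deriv_nonneg {f : ℝ → ℝ} {a : ℝ} (h : IsLocalMin f a)
    (hc : ContinuousAt f a) : 0 ≤ deriv (deriv f) a := by
  by_contra! hneg
  have hconst : f =ᶠ[𝓝 a] fun _ ↦ f a :=
    ((isLocalMax_of_deriv_deriv_neg hneg h.deriv_eq_zero hc).and h).mono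
      fun _ ht ↦ le_antisymm ht.1 ht.2
  have hzero : deriv (deriv f) a = 0 := by
    rw [hconst.deriv.deriv_eq, deriv_const', deriv_const]
  exact hneg.ne hzero

theorem eventually_deriv_neg_nhdsGT {f : ℝ → ℝ} {a : ℝ} (hd : deriv f a = 0)
    (hdd : deriv (deriv f) a < 0) : ∀ᶠ t in 𝓝[>] a, deriv f t < 0 :=
  deriv_neg_right_of_sign_deriv <| nhdsWithin_le_nhds <|
    eventually_nhdsWithin_sign_eq_of_deriv_neg hdd hd

theorem sin_two_mul_sub_pos {x R : ℝ} (hx : x ∈ Ioo R (R + π / 2)) : 0 < sin (2 * (x - R)) :=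
  sin_pos_of_pos_of_lt_pi (by linarith [hx.1]) (by linarith [hx.2])

theorem cap_geodesic_leaves_cap_general
    (R : ℝ) (x y : ℝ → ℝ)
    (hx : ContDiff ℝ 2 x)
    (hreg : ∀ t, y t ∈ Set.Ioo 0 Real.pi ∧ x t ∈ Set.Ioo R (R + Real.pi / 2))
    (hgeo : ∀ t,
      deriv (deriv x) t =
        (deriv x t) ^ 2 * Real.tan (x t - R)
          - 2 * deriv x t * deriv y t * Real.cot (y t)
          - (deriv y t) ^ 2 * Real.sin (2 * (x t - R))) :
    (∀ t₀ : ℝ, deriv x t₀ = 0 → deriv y t₀ ≠ 0 →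
      deriv (deriv x) t₀ = -(deriv y t₀) ^ 2 * Real.sin (2 * (x t₀ - R)) ∧
      deriv (deriv x) t₀ < 0) ∧
    (¬ ∃ t₁ t₂ : ℝ, t₁ < t₂ ∧
      deriv x t₁ = 0 ∧ deriv y t₁ ≠ 0 ∧
      deriv x t₂ = 0 ∧ deriv y t₂ ≠ 0 ∧
      ∀ t ∈ Set.Ioo t₁ t₂, 0 < deriv x t) ∧
    (∀ p : ℝ, 0 < p → (∀ t, x (t + p) = x t ∧ y (t + p) = y t) →
      (∀ t, deriv x t ≠ 0 ∨ deriv y t ≠ 0) → False) := by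
  have vertical : ∀ t₀, deriv x t₀ = 0 → deriv y t₀ ≠ 0 →
      deriv (deriv x) t₀ = -(deriv y t₀) ^ 2 * sin (2 * (x t₀ - R)) ∧
      deriv (deriv x) t₀ < 0 := by
    intro t₀ hx₀ hy₀
    have hacc : deriv (deriv x) t₀ = -(deriv y t₀) ^ 2 * sin (2 * (x t₀ - R)) := by
      rw [hgeo t₀, hx₀]; ring
    have hsin := sin_two_mul_sub_pos (hreg t₀).2
    refine ⟨hacc, hacc ▸ mul_neg_of_neg_of_pos ?_ hsin⟩
    exact neg_neg_of_pos (by positivity)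
  refine ⟨vertical, ?_, ?_⟩
  · rintro ⟨t₁, t₂, hlt, hx₁, hy₁, -, -, hpos⟩
    have hneg := eventually_deriv_neg_nhdsGT hx₁ (vertical t₁ hx₁ hy₁).2
    obtain ⟨t, hneg, ht⟩ := (hneg.and (Ioo_mem_nhdsGT hlt)).exists
    exact (hpos t ht).not_gt hneg
  · intro p hp hper hregular
    obtain ⟨a, hmin⟩ := Function.Periodic.exists_forall_le (fun t ↦ (hper t).1) hp.ne'
      hx.continuous
    have hlocmin : IsLocalMin x a := Eventually.of_forall hmin
    have hxa := hlocmin.deriv_eq_zero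
    exact (vertical a hxa ((hregular a).resolve_left (not_not.mpr hxa))).2.not_ge
      (hlocmin.deriv_deriv_nonneg hx.continuous.continuousAt)

/-- In the cap metric capping off the strip metric `ds² = sin²y(dx²+dy²)`, along any curve
in the right cap region satisfying the cap geodesic equation
`ẍ = ẋ²tan(x−R) − 2ẋẏ·cot y − ẏ²·sin 2(x−R)`:
at a vertical moment (`ẋ = 0`, `ẏ ≠ 0`) one has `ẍ = −ẏ²·sin(2(x−R)) < 0`; consequently
the curve cannot be vertical at two distinct times with `ẋ > 0` in between, and no
(regular, periodic) geodesic loop is contained in the cap. -/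
theorem cap_geodesic_leaves_cap
    (R : ℝ) (x y : ℝ → ℝ)
    (hx : ContDiff ℝ 2 x) (hy : ContDiff ℝ 2 y)
    (hreg : ∀ t, y t ∈ Set.Ioo 0 Real.pi ∧ x t ∈ Set.Ioo R (R + Real.pi / 2))
    (hgeo : ∀ t,
      deriv (deriv x) t =
        (deriv x t) ^ 2 * Real.tan (x t - R)
          - 2 * deriv x t * deriv y t * Real.cot (y t)
          - (deriv y t) ^ 2 * Real.sin (2 * (x t - R))) :
    (∀ t₀ : ℝ, deriv x t₀ = 0 → deriv y t₀ ≠ 0 →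
      deriv (deriv x) t₀ = -(deriv y t₀) ^ 2 * Real.sin (2 * (x t₀ - R)) ∧
      deriv (deriv x) t₀ < 0) ∧
    (¬ ∃ t₁ t₂ : ℝ, t₁ < t₂ ∧
      deriv x t₁ = 0 ∧ deriv y t₁ ≠ 0 ∧
      deriv x t₂ = 0 ∧ deriv y t₂ ≠ 0 ∧
      ∀ t ∈ Set.Ioo t₁ t₂, 0 < deriv x t) ∧
    (∀ p : ℝ, 0 < p → (∀ t, x (t + p) = x t ∧ y (t + p) = y t) →
      (∀ t, deriv x t ≠ 0 ∨ deriv y t ≠ 0) → False) :=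
  cap_geodesic_leaves_cap_general R x y hx hreg hgeo
end
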